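/- arXiv:1505.01331 — 9 statements merged into one kernel-verified Lean document; each statement's English description precedes it below -/
import Mathlib

section
/- For d = 2, with ψ = (φ, χ) and ψ' = (φ', χ') in ℝ² × ℝ, the weighted absolute value satisfies |A_n(u)|_Θ ψ · ψ' = ρ|v_n| φ_n^⊥ · φ'_n^⊥ + (χχ' + 2θ² φ_n φ'_n + (χ + ρ v_n φ_n)(χ' + ρ v_n φ'_n)) / √(4θ² + ρ² v_n²), where φ_n = φ·n and φ_n^⊥ = φ − φ_n n. -/
/-!
In the orthonormal frame `(n, n^⊥, e₃)` the matrix `ΘAₙΘ` splits into the eigenvalue `ρvₙ` on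
`n^⊥` and the block `M = [[ρvₙ, θ], [θ, 0]]` on `span(n, e₃)`. Since `det M² = θ⁴`, the square-root
formula for positive semidefinite `2 × 2` matrices gives `|M| = (M² + θ²I) / √(tr M² + 2θ²)`, and
`tr M² + 2θ² = 4θ² + ρ²vₙ²`. The matrix `R diag(|dᵢ|) Rᵀ` of the statement is a positive
semidefinite square root of `(ΘAₙΘ)²`, so by uniqueness of such roots it is this block matrix read
back in the standard basis; conjugating by `Θ⁻¹` and evaluating the bilinear form gives the formula.
-/

open Matrix

namespace Matrix

variable {ι : Type*} [Fintype ι]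

lemma orthogonal_conj_mul_conj [DecidableEq ι] {α : Type*} [Semiring α] {R : Matrix ι ι α}
    (hR : Rᵀ * R = 1) (E F : Matrix ι ι α) :
    R * E * Rᵀ * (R * F * Rᵀ) = R * (E * F) * Rᵀ := by
  calc R * E * Rᵀ * (R * F * Rᵀ) = R * E * (Rᵀ * R) * F * Rᵀ := by simp only [Matrix.mul_assoc]
    _ = R * (E * F) * Rᵀ := by rw [hR, Matrix.mul_one, Matrix.mul_assoc R E]

lemma PosSemidef.orthogonal_conj {E : Matrix ι ι ℝ} (hE : E.PosSemidef) (R : Matrix ι ι ℝ) :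
    (R * E * Rᵀ).PosSemidef := by
  simpa [conjTranspose_eq_transpose_of_trivial] using hE.mul_mul_conjTranspose_same R

theorem orthogonal_conj_diagonal_abs_eq_of_mul_self_eq [DecidableEq ι] {R : Matrix ι ι ℝ}
    (hR : R * Rᵀ = 1) {d : ι → ℝ} {B : Matrix ι ι ℝ} (hB : B.PosSemidef)
    (hB2 : B * B = R * diagonal d * Rᵀ * (R * diagonal d * Rᵀ)) :
    R * diagonal (fun i => |d i|) * Rᵀ = B := by
  have hR' : Rᵀ * R = 1 := mul_eq_one_comm.mp hR
  have habs : (R * diagonal (fun i => |d i|) * Rᵀ).PosSemidef :=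
    (PosSemidef.diagonal fun i => abs_nonneg (d i)).orthogonal_conj R
  open scoped MatrixOrder Matrix.Norms.L2Operator in
  refine (CFC.mul_self_eq_mul_self_iff _ _ (nonneg_iff_posSemidef.mpr habs)
    (nonneg_iff_posSemidef.mpr hB)).mp ?_
  rw [hB2, orthogonal_conj_mul_conj hR', orthogonal_conj_mul_conj hR', diagonal_mul_diagonal,
    diagonal_mul_diagonal]
  simp only [abs_mul_abs_self]

lemma IsSymm.mul_conj_mul {m k R : Type*} [Fintype m] [Fintype k] [CommSemiring R]
    {D : Matrix m m R} (hD : D.IsSymm) (Q : Matrix m k R) (M : Matrix k k R) :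
    D * (Q * M * Qᵀ) * D = D * Q * M * (D * Q)ᵀ := by
  rw [transpose_mul, hD.eq]
  simp only [Matrix.mul_assoc]

lemma conj_mulVec_dotProduct {m k R : Type*} [Fintype m] [Fintype k] [CommSemiring R]
    (P : Matrix m k R) (M : Matrix k k R) (x y : m → R) :
    ((P * M * Pᵀ) *ᵥ x) ⬝ᵥ y = (M *ᵥ (Pᵀ *ᵥ x)) ⬝ᵥ (Pᵀ *ᵥ y) := by
  rw [← mulVec_mulVec, ← mulVec_mulVec, dotProduct_comm, dotProduct_mulVec, ← mulVec_transpose,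
    dotProduct_comm]

end Matrix

def normalFrame (n : Fin 2 → ℝ) : Matrix (Fin 3) (Fin 3) ℝ :=
  !![n 0, -n 1, 0; n 1, n 0, 0; 0, 0, 1]

/-- `ΘAₙΘ` written in the frame `normalFrame n`, with `a = ρvₙ`. -/
def frameSymbol (a θ : ℝ) : Matrix (Fin 3) (Fin 3) ℝ :=
  !![a, 0, θ; 0, a, 0; θ, 0, 0]

noncomputable def frameSymbolAbs (a θ : ℝ) : Matrix (Fin 3) (Fin 3) ℝ :=
  let s := √(4 * θ ^ 2 + a ^ 2)
  !![(2 * θ ^ 2 + a ^ 2) / s, 0, a * θ / s; 0, |a|, 0; a * θ / s, 0, 2 * θ ^ 2 / s]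

lemma normalFrame_mul_transpose {n : Fin 2 → ℝ} (hn : n 0 ^ 2 + n 1 ^ 2 = 1) :
    normalFrame n * (normalFrame n)ᵀ = 1 := by
  rw [one_fin_three]
  ext i j
  fin_cases i <;> fin_cases j <;>
    simp only [normalFrame, mul_apply, transpose_apply, Fin.sum_univ_three, of_apply, cons_val',
      cons_val, cons_val_fin_one, Fin.isValue, Fin.zero_eta, Fin.mk_one, Fin.reduceFinMk] <;>
    grind

lemma diagonal_mul_symbol_mul_diagonal {n : Fin 2 → ℝ} (hn : n 0 ^ 2 + n 1 ^ 2 = 1) (a θ : ℝ) :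
    diagonal ![1, 1, θ] * !![a, 0, n 0; 0, a, n 1; n 0, n 1, 0] * diagonal ![1, 1, θ] =
      normalFrame n * frameSymbol a θ * (normalFrame n)ᵀ := by
  rw [diagonal_fin_three]
  ext i j
  fin_cases i <;> fin_cases j <;>
    simp only [normalFrame, frameSymbol, mul_apply, transpose_apply, Fin.sum_univ_three, of_apply,
      cons_val', cons_val, cons_val_fin_one, Fin.isValue, Fin.zero_eta, Fin.mk_one,
      Fin.reduceFinMk] <;>
    grind

lemma frameSymbolAbs_posSemidef (a θ : ℝ) : (frameSymbolAbs a θ).PosSemidef := by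
  set s := √(4 * θ ^ 2 + a ^ 2)
  refine PosSemidef.of_dotProduct_mulVec_nonneg ?_ fun x => ?_
  · ext i j
    fin_cases i <;> fin_cases j <;>
      simp only [frameSymbolAbs, conjTranspose_apply, star_trivial, of_apply, cons_val', cons_val,
        cons_val_fin_one, Fin.isValue, Fin.zero_eta, Fin.mk_one, Fin.reduceFinMk]
  · have hquad : star x ⬝ᵥ (frameSymbolAbs a θ *ᵥ x) =
        |a| * x 1 ^ 2 + ((a * x 0 + θ * x 2) ^ 2 + 2 * θ ^ 2 * x 0 ^ 2 + θ ^ 2 * x 2 ^ 2) / s := by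
      simp only [frameSymbolAbs, dotProduct, mulVec, Fin.sum_univ_three, star_trivial,
        Pi.star_apply, of_apply, cons_val', cons_val, cons_val_fin_one, Fin.isValue]
      ring
    rw [hquad]
    positivity

lemma frameSymbolAbs_mul_self {θ : ℝ} (hθ : θ ≠ 0) (a : ℝ) :
    frameSymbolAbs a θ * frameSymbolAbs a θ = frameSymbol a θ * frameSymbol a θ := by
  have hs : 0 < √(4 * θ ^ 2 + a ^ 2) := Real.sqrt_pos.mpr (by positivity)
  have hs2 := Real.sq_sqrt (show 0 ≤ 4 * θ ^ 2 + a ^ 2 by positivity)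
  simp only [frameSymbolAbs, frameSymbol]
  generalize √(4 * θ ^ 2 + a ^ 2) = s at hs hs2
  ext i j
  fin_cases i <;> fin_cases j <;>
    simp only [mul_apply, Fin.sum_univ_three, of_apply, cons_val', cons_val, cons_val_fin_one,
      Fin.isValue, Fin.zero_eta, Fin.mk_one, Fin.reduceFinMk, mul_zero, zero_mul, add_zero,
      zero_add, abs_mul_abs_self] <;>
    (field_simp; rw [hs2]; ring)

lemma inv_diagonal_one_one {θ : ℝ} (hθ : θ ≠ 0) :
    (diagonal ![1, 1, θ])⁻¹ = diagonal ![1, 1, θ⁻¹] := by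
  refine inv_eq_left_inv ?_
  rw [diagonal_mul_diagonal, ← diagonal_one]
  congr 1
  ext i
  fin_cases i <;> simp [hθ]

lemma transpose_diagonal_mul_normalFrame_mulVec (θ : ℝ) (n φ : Fin 2 → ℝ) (χ : ℝ) :
    (diagonal ![1, 1, θ⁻¹] * normalFrame n)ᵀ *ᵥ ![φ 0, φ 1, χ] =
      ![φ 0 * n 0 + φ 1 * n 1, n 0 * φ 1 - n 1 * φ 0, χ / θ] := by
  ext i
  fin_cases i <;>
    simp only [normalFrame, mulVec, dotProduct, Fin.sum_univ_three, transpose_apply, diagonal_mul,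
      of_apply, cons_val', cons_val, cons_val_fin_one, Fin.isValue, Fin.zero_eta, Fin.mk_one,
      Fin.reduceFinMk] <;>
    ring

lemma perp_dotProduct_perp {n : Fin 2 → ℝ} (hn : n 0 ^ 2 + n 1 ^ 2 = 1) (φ φ' : Fin 2 → ℝ) :
    let φn := φ 0 * n 0 + φ 1 * n 1
    let φ'n := φ' 0 * n 0 + φ' 1 * n 1
    (φ 0 - φn * n 0) * (φ' 0 - φ'n * n 0) + (φ 1 - φn * n 1) * (φ' 1 - φ'n * n 1) =
      (n 0 * φ 1 - n 1 * φ 0) * (n 0 * φ' 1 - n 1 * φ' 0) := by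
  intro φn φ'n
  linear_combination (φn * φ'n - φ 0 * φ' 0 - φ 1 * φ' 1) * hn

/-- For `d = 2`, `ψ = (φ, χ)`, `ψ' = (φ', χ')`:
`|Aₙ(u)|_Θ ψ · ψ' = ρ|vₙ| φₙ^⊥ · φ'ₙ^⊥ + (χχ' + 2θ² φₙ φ'ₙ + (χ + ρ vₙ φₙ)(χ' + ρ vₙ φ'ₙ))/√(4θ² + ρ² vₙ²)`. -/
theorem stmt_5 (ρ θ vn : ℝ) (hρ : 0 < ρ) (hθ : 0 < θ)
    (n : Fin 2 → ℝ) (hn : n 0 ^ 2 + n 1 ^ 2 = 1)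
    (Th A : Matrix (Fin 3) (Fin 3) ℝ)
    (hTh : Th = Matrix.diagonal ![1, 1, θ])
    (hA : A = !![ρ * vn, 0, n 0; 0, ρ * vn, n 1; n 0, n 1, 0])
    (R : Matrix (Fin 3) (Fin 3) ℝ) (dv : Fin 3 → ℝ)
    (hR : R * Rᵀ = 1)
    (hdec : Th * A * Th = R * Matrix.diagonal dv * Rᵀ)
    (Mabs : Matrix (Fin 3) (Fin 3) ℝ)
    (hMabs : Mabs = Th⁻¹ * (R * Matrix.diagonal (fun i => |dv i|) * Rᵀ) * Th⁻¹)
    (φ φ' : Fin 2 → ℝ) (χ χ' : ℝ) (φn φ'n : ℝ)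
    (hφn : φn = φ 0 * n 0 + φ 1 * n 1) (hφ'n : φ'n = φ' 0 * n 0 + φ' 1 * n 1) :
    (Mabs *ᵥ ![φ 0, φ 1, χ]) ⬝ᵥ ![φ' 0, φ' 1, χ'] =
      ρ * |vn| * ((φ 0 - φn * n 0) * (φ' 0 - φ'n * n 0) + (φ 1 - φn * n 1) * (φ' 1 - φ'n * n 1))
      + (χ * χ' + 2 * θ ^ 2 * φn * φ'n + (χ + ρ * vn * φn) * (χ' + ρ * vn * φ'n))
          / Real.sqrt (4 * θ ^ 2 + ρ ^ 2 * vn ^ 2) := by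
  subst hTh hA hMabs hφn hφ'n
  set Q := normalFrame n
  have hQ : Qᵀ * Q = 1 := mul_eq_one_comm.mp (normalFrame_mul_transpose hn)
  have habs : R * diagonal (fun i => |dv i|) * Rᵀ = Q * frameSymbolAbs (ρ * vn) θ * Qᵀ := by
    refine orthogonal_conj_diagonal_abs_eq_of_mul_self_eq hR
      ((frameSymbolAbs_posSemidef _ _).orthogonal_conj Q) ?_
    rw [← hdec, diagonal_mul_symbol_mul_diagonal hn, orthogonal_conj_mul_conj hQ,
      orthogonal_conj_mul_conj hQ, frameSymbolAbs_mul_self hθ.ne']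
  rw [habs, inv_diagonal_one_one hθ.ne', (isSymm_diagonal _).mul_conj_mul, conj_mulVec_dotProduct,
    transpose_diagonal_mul_normalFrame_mulVec, transpose_diagonal_mul_normalFrame_mulVec,
    perp_dotProduct_perp hn]
  simp only [frameSymbolAbs, mulVec, dotProduct, Fin.sum_univ_three, abs_mul, abs_of_pos hρ,
    of_apply, cons_val', cons_val, cons_val_fin_one, Fin.isValue]
  field_simp
  ring
end

section
/- For d = 2, with ψ = (φ, χ) and ψ' = (φ', χ'), the weighted negative part satisfies A_n(u)^-_Θ ψ · ψ' = ρ v_n^- φ_n^⊥ · φ'_n^⊥ − (χ + λ_m φ_n)(χ' + λ_m φ'_n)/√(4θ² + ρ² v_n²), where λ_m = (ρ v_n − √(4θ² + ρ² v_n²))/2 and v_n^- = min(v_n, 0). -/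
open Matrix

set_option maxHeartbeats 3200000

/-- For `d = 2`, the weighted negative part satisfies
`Aₙ(u)⁻_Θ ψ · ψ' = ρ vₙ⁻ φₙ^⊥ · φ'ₙ^⊥ − (χ + λm φₙ)(χ' + λm φ'ₙ)/√(4θ² + ρ² vₙ²)`. -/
theorem stmt_6 (ρ θ vn : ℝ) (hρ : 0 < ρ) (hθ : 0 < θ)
    (n : Fin 2 → ℝ) (hn : n 0 ^ 2 + n 1 ^ 2 = 1)
    (Th A : Matrix (Fin 3) (Fin 3) ℝ)
    (hTh : Th = Matrix.diagonal ![1, 1, θ])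
    (hA : A = !![ρ * vn, 0, n 0; 0, ρ * vn, n 1; n 0, n 1, 0])
    (R : Matrix (Fin 3) (Fin 3) ℝ) (dv : Fin 3 → ℝ)
    (hR : R * Rᵀ = 1)
    (hdec : Th * A * Th = R * Matrix.diagonal dv * Rᵀ)
    (Mneg : Matrix (Fin 3) (Fin 3) ℝ)
    (hMneg : Mneg = Th⁻¹ * (R * Matrix.diagonal (fun i => min (dv i) 0) * Rᵀ) * Th⁻¹)
    (lm : ℝ) (hlm : lm = (ρ * vn - Real.sqrt (4 * θ ^ 2 + ρ ^ 2 * vn ^ 2)) / 2)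
    (φ φ' : Fin 2 → ℝ) (χ χ' : ℝ) (φn φ'n : ℝ)
    (hφn : φn = φ 0 * n 0 + φ 1 * n 1) (hφ'n : φ'n = φ' 0 * n 0 + φ' 1 * n 1) :
    (Mneg *ᵥ ![φ 0, φ 1, χ]) ⬝ᵥ ![φ' 0, φ' 1, χ'] =
      ρ * min vn 0 * ((φ 0 - φn * n 0) * (φ' 0 - φ'n * n 0) + (φ 1 - φn * n 1) * (φ' 1 - φ'n * n 1))
      - (χ + lm * φn) * (χ' + lm * φ'n) / Real.sqrt (4 * θ ^ 2 + ρ ^ 2 * vn ^ 2) := by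
  subst hTh hA hMneg hlm hφn hφ'n
  set a := ρ * vn with ha
  set s := Real.sqrt (4 * θ ^ 2 + ρ ^ 2 * vn ^ 2) with hsdef
  have hθne : θ ≠ 0 := ne_of_gt hθ
  have hs2 : s ^ 2 = a ^ 2 + 4 * θ ^ 2 := by
    rw [hsdef, Real.sq_sqrt (by positivity), ha]; ring
  have hspos : 0 < s := by
    rw [hsdef]; exact Real.sqrt_pos.mpr (by positivity)
  have hsne : s ≠ 0 := ne_of_gt hspos
  have hsv : s * s⁻¹ = 1 := mul_inv_cancel₀ hsne
  have htu : θ * θ⁻¹ = 1 := mul_inv_cancel₀ hθne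
  have hcne : (4 * s * θ ^ 2 : ℝ) ≠ 0 :=
    mul_ne_zero (mul_ne_zero (by norm_num) hsne) (pow_ne_zero 2 hθne)
  have hlp : (0:ℝ) ≤ (a + s) / 2 := by nlinarith [hs2, hspos, sq_nonneg (a + s), mul_pos hθ hθ]
  have hlmn : (a - s) / 2 ≤ 0 := by nlinarith [hs2, hspos, sq_nonneg (a - s), mul_pos hθ hθ]
  have hρm : ρ * min vn 0 = min a 0 := by
    rw [ha]
    rcases le_total vn 0 with h | h
    · rw [min_eq_left h, min_eq_left (by nlinarith : ρ * vn ≤ 0)]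
    · rw [min_eq_right h, min_eq_right (by nlinarith : (0:ℝ) ≤ ρ * vn), mul_zero]
  have hRtR : Rᵀ * R = 1 := mul_eq_one_comm.mp hR
  have hcanc : ∀ Z : Matrix (Fin 3) (Fin 3) ℝ, R * (Rᵀ * Z) = Z := by
    intro Z; rw [← Matrix.mul_assoc, hR, Matrix.one_mul]
  have hcanc2 : ∀ Z : Matrix (Fin 3) (Fin 3) ℝ, Rᵀ * (R * Z) = Z := by
    intro Z; rw [← Matrix.mul_assoc, hRtR, Matrix.one_mul]
  have hBm : R * Matrix.diagonal dv * Rᵀ = !![a, 0, θ * n 0; 0, a, θ * n 1; θ * n 0, θ * n 1, 0] := by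
    rw [← hdec]
    ext i j
    fin_cases i <;> fin_cases j <;>
      simp [Matrix.mul_apply, Fin.sum_univ_succ, Matrix.diagonal, Matrix.of_apply] <;> ring
  have hDeq : Matrix.diagonal dv = Rᵀ * !![a, 0, θ * n 0; 0, a, θ * n 1; θ * n 0, θ * n 1, 0] * R := by
    rw [← hBm]
    simp only [Matrix.mul_assoc, hRtR, Matrix.mul_one, hcanc2]
  have hfact : ∀ c1 : ℝ, Rᵀ * (!![a, 0, θ * n 0; 0, a, θ * n 1; θ * n 0, θ * n 1, 0] - c1 • 1) * R = Matrix.diagonal (fun i => dv i - c1) := by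
    intro c1
    have h1 : Matrix.diagonal (fun i => dv i - c1) = Matrix.diagonal dv - c1 • 1 := by
      ext i j
      by_cases h : i = j <;> simp [Matrix.diagonal_apply, h, Matrix.one_apply]
    rw [h1, hDeq, Matrix.mul_sub, Matrix.sub_mul, Matrix.mul_smul, Matrix.mul_one,
      Matrix.smul_mul, hRtR]
  have hPB : (!![a, 0, θ * n 0; 0, a, θ * n 1; θ * n 0, θ * n 1, 0] - a • 1) * ((!![a, 0, θ * n 0; 0, a, θ * n 1; θ * n 0, θ * n 1, 0] - ((a+s)/2) • 1) * (!![a, 0, θ * n 0; 0, a, θ * n 1; θ * n 0, θ * n 1, 0] - ((a-s)/2) • 1)) = 0 := by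
    ext i j
    fin_cases i <;> fin_cases j <;>
      simp [Matrix.mul_apply, Fin.sum_univ_succ, Matrix.one_apply, Matrix.sub_apply,
        Matrix.smul_apply, -mul_eq_zero, -or_true, -true_or]
    all_goals try ring
    all_goals try linear_combination (((-1/4 : ℝ)*θ*n 0)) * hs2 + ((θ^3*n 0)) * hn
    all_goals try linear_combination (((-1/4 : ℝ)*θ*n 1)) * hs2 + ((θ^3*n 1)) * hn
    all_goals linear_combination (((1/4 : ℝ)*a)) * hs2 + (((-1 : ℝ)*a*θ^2)) * hn
  have hPD : ∀ j, (dv j - a) * ((dv j - (a+s)/2) * (dv j - (a-s)/2)) = 0 := by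
    intro j
    have h0 : Matrix.diagonal (fun i => (dv i - a) * ((dv i - (a+s)/2) * (dv i - (a-s)/2)))
        = (0 : Matrix (Fin 3) (Fin 3) ℝ) := by
      calc Matrix.diagonal (fun i => (dv i - a) * ((dv i - (a+s)/2) * (dv i - (a-s)/2)))
          = Matrix.diagonal (fun i => dv i - a) *
            (Matrix.diagonal (fun i => dv i - (a+s)/2) * Matrix.diagonal (fun i => dv i - (a-s)/2)) := by
            rw [Matrix.diagonal_mul_diagonal, Matrix.diagonal_mul_diagonal]
        _ = (Rᵀ * (!![a, 0, θ * n 0; 0, a, θ * n 1; θ * n 0, θ * n 1, 0] - a • 1) * R) *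
            ((Rᵀ * (!![a, 0, θ * n 0; 0, a, θ * n 1; θ * n 0, θ * n 1, 0] - ((a+s)/2) • 1) * R) * (Rᵀ * (!![a, 0, θ * n 0; 0, a, θ * n 1; θ * n 0, θ * n 1, 0] - ((a-s)/2) • 1) * R)) := by
            rw [hfact, hfact, hfact]
        _ = Rᵀ * ((!![a, 0, θ * n 0; 0, a, θ * n 1; θ * n 0, θ * n 1, 0] - a • 1) * ((!![a, 0, θ * n 0; 0, a, θ * n 1; θ * n 0, θ * n 1, 0] - ((a+s)/2) • 1) * (!![a, 0, θ * n 0; 0, a, θ * n 1; θ * n 0, θ * n 1, 0] - ((a-s)/2) • 1))) * R := by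
            simp only [Matrix.mul_assoc, hcanc, hcanc2]
        _ = 0 := by rw [hPB, Matrix.mul_zero, Matrix.zero_mul]
    have := congrArg (fun M : Matrix (Fin 3) (Fin 3) ℝ => M j j) h0
    simpa [Matrix.diagonal_apply_eq] using this
  have hmin : ∀ j, min (dv j) 0 =
      (s⁻¹ * θ⁻¹ * θ⁻¹ / 4) * ((-(4 * (min a 0) * s) - (a - s)^2) * (dv j)^2 + (4 * a * (min a 0) * s + (a - s)^2 * (3*a + s) / 2) * (dv j) + (4 * s * θ^2 * (min a 0) + 2 * θ^2 * a * (a - s))) := by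
    intro j
    rcases mul_eq_zero.mp (hPD j) with h | h
    · have hj : dv j = a := sub_eq_zero.mp h
      rw [hj]
      refine mul_left_cancel₀ hcne ?_
      linear_combination (((-4 : ℝ)*s*θ^4*θ⁻¹^2*(min a 0)) + ((2 : ℝ)*a*s*θ^4*θ⁻¹^2) + ((-1/2 : ℝ)*a*s^3*θ^2*θ⁻¹^2) + ((-2 : ℝ)*a^2*θ^4*θ⁻¹^2) + ((1/2 : ℝ)*a^2*s^2*θ^2*θ⁻¹^2) + ((1/2 : ℝ)*a^3*s*θ^2*θ⁻¹^2) + ((-1/2 : ℝ)*a^4*θ^2*θ⁻¹^2)) * hsv + (((-4 : ℝ)*s*θ^2*(min a 0)) + ((-4 : ℝ)*s*θ^3*θ⁻¹*(min a 0)) + ((2 : ℝ)*a*s*θ^2) + ((2 : ℝ)*a*s*θ^3*θ⁻¹) + ((-1/2 : ℝ)*a*s^3) + ((-1/2 : ℝ)*a*s^3*θ*θ⁻¹) + ((-2 : ℝ)*a^2*θ^2) + ((-2 : ℝ)*a^2*θ^3*θ⁻¹) + ((1/2 : ℝ)*a^2*s^2) + ((1/2 : ℝ)*a^2*s^2*θ*θ⁻¹)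 + ((1/2 : ℝ)*a^3*s) + ((1/2 : ℝ)*a^3*s*θ*θ⁻¹) + ((-1/2 : ℝ)*a^4) + ((-1/2 : ℝ)*a^4*θ*θ⁻¹)) * htu + (((-1/2 : ℝ)*a*s) + ((1/2 : ℝ)*a^2)) * hs2
    · rcases mul_eq_zero.mp h with h' | h'
      · have hj : dv j = (a+s)/2 := sub_eq_zero.mp h'
        rw [hj, min_eq_right hlp]
        refine mul_left_cancel₀ hcne ?_
        linear_combination (((-4 : ℝ)*s*θ^4*θ⁻¹^2*(min a 0)) + (s^3*θ^2*θ⁻¹^2*(min a 0)) + ((2 : ℝ)*a*s*θ^4*θ⁻¹^2) + ((-1/2 : ℝ)*a*s^3*θ^2*θ⁻¹^2) + ((-2 : ℝ)*a^2*θ^4*θ⁻¹^2) + ((-1 : ℝ)*a^2*s*θ^2*θ⁻¹^2*(min a 0)) + ((1/2 : ℝ)*a^2*s^2*θ^2*θ⁻¹^2) + ((1/2 : ℝ)*a^3*s*θ^2*θ⁻¹^2) + ((-1/2 : ℝ)*a^4*θ^2*θ⁻¹^2)) * hsv + (((-4 : ℝ)*s*θ^2*(min a 0)) + ((-4 : ℝ)*s*θ^3*θ⁻¹*(min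 a 0)) + (s^3*(min a 0)) + (s^3*θ*θ⁻¹*(min a 0)) + ((2 : ℝ)*a*s*θ^2) + ((2 : ℝ)*a*s*θ^3*θ⁻¹) + ((-1/2 : ℝ)*a*s^3) + ((-1/2 : ℝ)*a*s^3*θ*θ⁻¹) + ((-2 : ℝ)*a^2*θ^2) + ((-2 : ℝ)*a^2*θ^3*θ⁻¹) + ((-1 : ℝ)*a^2*s*(min a 0)) + ((-1 : ℝ)*a^2*s*θ*θ⁻¹*(min a 0)) + ((1/2 : ℝ)*a^2*s^2) + ((1/2 : ℝ)*a^2*s^2*θ*θ⁻¹) + ((1/2 : ℝ)*a^3*s) + ((1/2 : ℝ)*a^3*s*θ*θ⁻¹) + ((-1/2 : ℝ)*a^4) + ((-1/2 : ℝ)*a^4*θ*θ⁻¹)) * htu + ((s*(min a 0)) + ((-1/2 : ℝ)*a*s) + ((1/2 : ℝ)*a^2)) * hs2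
      · have hj : dv j = (a-s)/2 := sub_eq_zero.mp h'
        rw [hj, min_eq_left hlmn]
        refine mul_left_cancel₀ hcne ?_
        linear_combination (((-4 : ℝ)*s*θ^4*θ⁻¹^2*(min a 0)) + (s^3*θ^2*θ⁻¹^2*(min a 0)) + ((1/2 : ℝ)*s^4*θ^2*θ⁻¹^2) + ((2 : ℝ)*a*s*θ^4*θ⁻¹^2) + ((-1 : ℝ)*a*s^3*θ^2*θ⁻¹^2) + ((-2 : ℝ)*a^2*θ^4*θ⁻¹^2) + ((-1 : ℝ)*a^2*s*θ^2*θ⁻¹^2*(min a 0)) + (a^3*s*θ^2*θ⁻¹^2) + ((-1/2 : ℝ)*a^4*θ^2*θ⁻¹^2)) * hsv + (((-4 : ℝ)*s*θ^2*(min a 0)) + ((-4 : ℝ)*s*θ^3*θ⁻¹*(min a 0)) + (s^3*(min a 0)) + (s^3*θ*θ⁻¹*(min a 0)) + ((1/2 : ℝ)*s^4) + ((1/2 : ℝ)*s^4*θ*θ⁻¹) + ((2 : ℝ)*a*s*θ^2) + ((2 : ℝ)*a*s*θ^3*θ⁻¹) + ((-1 : ℝ)*a*s^3) + ((-1 : ℝ)*a*s^3*θ*θ⁻¹)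 + ((-2 : ℝ)*a^2*θ^2) + ((-2 : ℝ)*a^2*θ^3*θ⁻¹) + ((-1 : ℝ)*a^2*s*(min a 0)) + ((-1 : ℝ)*a^2*s*θ*θ⁻¹*(min a 0)) + (a^3*s) + (a^3*s*θ*θ⁻¹) + ((-1/2 : ℝ)*a^4) + ((-1/2 : ℝ)*a^4*θ*θ⁻¹)) * htu + ((s*(min a 0)) + ((1/2 : ℝ)*s^2) + ((-1 : ℝ)*a*s) + ((1/2 : ℝ)*a^2)) * hs2
  have hDneg : Matrix.diagonal (fun i => min (dv i) 0) =
      (s⁻¹ * θ⁻¹ * θ⁻¹ / 4) • ((-(4 * (min a 0) * s) - (a - s)^2) • (Matrix.diagonal dv * Matrix.diagonal dv) +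
        (4 * a * (min a 0) * s + (a - s)^2 * (3*a + s) / 2) • Matrix.diagonal dv + (4 * s * θ^2 * (min a 0) + 2 * θ^2 * a * (a - s)) • (1 : Matrix (Fin 3) (Fin 3) ℝ)) := by
    ext i j
    by_cases h : i = j
    · subst h
      simp only [Matrix.diagonal_mul_diagonal, Matrix.smul_apply, Matrix.add_apply,
        Matrix.diagonal_apply_eq, Matrix.one_apply_eq, Pi.mul_apply, smul_eq_mul]
      rw [hmin i]; ring
    · simp [Matrix.diagonal_apply_ne _ h, Matrix.diagonal_mul_diagonal, Matrix.one_apply_ne h, h]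
  have hDD : R * (Matrix.diagonal dv * Matrix.diagonal dv) * Rᵀ = !![a, 0, θ * n 0; 0, a, θ * n 1; θ * n 0, θ * n 1, 0] * !![a, 0, θ * n 0; 0, a, θ * n 1; θ * n 0, θ * n 1, 0] := by
    have h1 : R * (Matrix.diagonal dv * Matrix.diagonal dv) * Rᵀ =
        (R * Matrix.diagonal dv * Rᵀ) * (R * Matrix.diagonal dv * Rᵀ) := by
      simp only [Matrix.mul_assoc, hcanc, hcanc2]
    rw [h1, hBm]
  have hRDR : R * Matrix.diagonal (fun i => min (dv i) 0) * Rᵀ =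
      (s⁻¹ * θ⁻¹ * θ⁻¹ / 4) • ((-(4 * (min a 0) * s) - (a - s)^2) • (!![a, 0, θ * n 0; 0, a, θ * n 1; θ * n 0, θ * n 1, 0] * !![a, 0, θ * n 0; 0, a, θ * n 1; θ * n 0, θ * n 1, 0]) + (4 * a * (min a 0) * s + (a - s)^2 * (3*a + s) / 2) • !![a, 0, θ * n 0; 0, a, θ * n 1; θ * n 0, θ * n 1, 0] + (4 * s * θ^2 * (min a 0) + 2 * θ^2 * a * (a - s)) • (1 : Matrix (Fin 3) (Fin 3) ℝ)) := by
    rw [hDneg, Matrix.mul_smul, Matrix.smul_mul]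
    congr 1
    simp only [Matrix.mul_add, Matrix.add_mul, Matrix.mul_smul, Matrix.smul_mul]
    rw [Matrix.mul_one, hR, hDD, hBm]
  have hThinv : (Matrix.diagonal ![1,1,θ])⁻¹ = Matrix.diagonal ![1,1,θ⁻¹] := by
    apply Matrix.inv_eq_right_inv
    rw [Matrix.diagonal_mul_diagonal]
    ext i j
    fin_cases i <;> fin_cases j <;> simp [Matrix.diagonal, Matrix.one_apply, htu]
  have hM : (Matrix.diagonal ![1,1,θ])⁻¹ *
      (R * Matrix.diagonal (fun i => min (dv i) 0) * Rᵀ) * (Matrix.diagonal ![1,1,θ])⁻¹ =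
      !![(min a 0)*(1 - n 0^2) - (a-s)^2/4 * n 0^2 * s⁻¹, -((min a 0) * n 0 * n 1) - (a-s)^2/4 * n 0 * n 1 * s⁻¹, -((a-s)/2 * n 0 * s⁻¹); -((min a 0) * n 0 * n 1) - (a-s)^2/4 * n 0 * n 1 * s⁻¹, (min a 0)*(1 - n 1^2) - (a-s)^2/4 * n 1^2 * s⁻¹, -((a-s)/2 * n 1 * s⁻¹); -((a-s)/2 * n 0 * s⁻¹), -((a-s)/2 * n 1 * s⁻¹), -s⁻¹] := by
    rw [hThinv, hRDR]
    ext i j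
    fin_cases i <;> fin_cases j <;>
      simp [Matrix.mul_apply, Fin.sum_univ_succ, Matrix.smul_apply, Matrix.add_apply,
        Matrix.one_apply, Matrix.diagonal, Matrix.of_apply, smul_eq_mul]
    all_goals refine mul_left_cancel₀ hcne ?_
    all_goals try linear_combination (((4 : ℝ)*s*θ^4*θ⁻¹^2*(min a 0)) + ((-4 : ℝ)*s*θ^4*θ⁻¹^2*(min a 0)*n 0^2) + (s^2*θ^2*n 0^2) + ((-1 : ℝ)*s^2*θ^4*θ⁻¹^2*n 0^2) + ((-2 : ℝ)*a*s*θ^2*n 0^2) + ((-2 : ℝ)*a*s*θ^4*θ⁻¹^2) + ((2 : ℝ)*a*s*θ^4*θ⁻¹^2*n 0^2) + ((1/2 : ℝ)*a*s^3*θ^2*θ⁻¹^2) + (a^2*θ^2*n 0^2) + ((2 : ℝ)*a^2*θ^4*θ⁻¹^2) + ((-1 : ℝ)*a^2*θ^4*θ⁻¹^2*n 0^2) + ((-1/2 : ℝ)*a^2*s^2*θ^2*θ⁻¹^2) + ((-1/2 : ℝ)*a^3*s*θ^2*θ⁻¹^2) + ((1/2 : ℝ)*a^4*θ^2*θ⁻¹^2))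 * hsv + (((4 : ℝ)*s*θ^2*(min a 0)) + ((-4 : ℝ)*s*θ^2*(min a 0)*n 0^2) + ((4 : ℝ)*s*θ^3*θ⁻¹*(min a 0)) + ((-4 : ℝ)*s*θ^3*θ⁻¹*(min a 0)*n 0^2) + ((-1 : ℝ)*s^2*θ^2*n 0^2) + ((-1 : ℝ)*s^2*θ^3*θ⁻¹*n 0^2) + ((-2 : ℝ)*a*s*θ^2) + ((2 : ℝ)*a*s*θ^2*n 0^2) + ((-2 : ℝ)*a*s*θ^3*θ⁻¹) + ((2 : ℝ)*a*s*θ^3*θ⁻¹*n 0^2) + ((1/2 : ℝ)*a*s^3) + ((1/2 : ℝ)*a*s^3*θ*θ⁻¹) + ((2 : ℝ)*a^2*θ^2) + ((-1 : ℝ)*a^2*θ^2*n 0^2) + ((2 : ℝ)*a^2*θ^3*θ⁻¹) + ((-1 : ℝ)*a^2*θ^3*θ⁻¹*n 0^2) + ((-1/2 : ℝ)*a^2*s^2) + ((-1/2 : ℝ)*a^2*s^2*θ*θ⁻¹) + ((-1/2 : ℝ)*a^3*s) + ((-1/2 : ℝ)*a^3*s*θ*θ⁻¹) + ((1/2 :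 ℝ)*a^4) + ((1/2 : ℝ)*a^4*θ*θ⁻¹)) * htu + (((1/2 : ℝ)*a*s) + ((-1/2 : ℝ)*a^2)) * hs2
    all_goals try linear_combination (((-4 : ℝ)*s*θ^4*θ⁻¹^2*(min a 0)*n 0*n 1) + (s^2*θ^2*n 0*n 1) + ((-1 : ℝ)*s^2*θ^4*θ⁻¹^2*n 0*n 1) + ((-2 : ℝ)*a*s*θ^2*n 0*n 1) + ((2 : ℝ)*a*s*θ^4*θ⁻¹^2*n 0*n 1) + (a^2*θ^2*n 0*n 1) + ((-1 : ℝ)*a^2*θ^4*θ⁻¹^2*n 0*n 1)) * hsv + (((-4 : ℝ)*s*θ^2*(min a 0)*n 0*n 1) + ((-4 : ℝ)*s*θ^3*θ⁻¹*(min a 0)*n 0*n 1) + ((-1 : ℝ)*s^2*θ^2*n 0*n 1) + ((-1 : ℝ)*s^2*θ^3*θ⁻¹*n 0*n 1) + ((2 : ℝ)*a*s*θ^2*n 0*n 1) + ((2 : ℝ)*a*s*θ^3*θ⁻¹*n 0*n 1) + ((-1 : ℝ)*a^2*θ^2*n 0*n 1) + ((-1 : ℝ)*a^2*θ^3*θ⁻¹*n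 0*n 1)) * htu
    all_goals try linear_combination (((-2 : ℝ)*s*θ^2*n 0) + ((1/2 : ℝ)*s^3*θ^3*θ⁻¹^3*n 0) + ((2 : ℝ)*a*θ^2*n 0) + ((-1/2 : ℝ)*a*s^2*θ^3*θ⁻¹^3*n 0) + ((-1/2 : ℝ)*a^2*s*θ^3*θ⁻¹^3*n 0) + ((1/2 : ℝ)*a^3*θ^3*θ⁻¹^3*n 0)) * hsv + (((1/2 : ℝ)*s^3*n 0) + ((1/2 : ℝ)*s^3*θ*θ⁻¹*n 0) + ((1/2 : ℝ)*s^3*θ^2*θ⁻¹^2*n 0) + ((-1/2 : ℝ)*a*s^2*n 0) + ((-1/2 : ℝ)*a*s^2*θ*θ⁻¹*n 0) + ((-1/2 : ℝ)*a*s^2*θ^2*θ⁻¹^2*n 0) + ((-1/2 : ℝ)*a^2*s*n 0) + ((-1/2 : ℝ)*a^2*s*θ*θ⁻¹*n 0) + ((-1/2 : ℝ)*a^2*s*θ^2*θ⁻¹^2*n 0) + ((1/2 : ℝ)*a^3*n 0) + ((1/2 : ℝ)*a^3*θ*θ⁻¹*n 0) + ((1/2 : ℝ)*a^3*θ^2*θ⁻¹^2*n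 0)) * htu + (((1/2 : ℝ)*s*n 0) + ((-1/2 : ℝ)*a*n 0)) * hs2
    all_goals try linear_combination (((4 : ℝ)*s*θ^4*θ⁻¹^2*(min a 0)) + ((-4 : ℝ)*s*θ^4*θ⁻¹^2*(min a 0)*n 1^2) + (s^2*θ^2*n 1^2) + ((-1 : ℝ)*s^2*θ^4*θ⁻¹^2*n 1^2) + ((-2 : ℝ)*a*s*θ^2*n 1^2) + ((-2 : ℝ)*a*s*θ^4*θ⁻¹^2) + ((2 : ℝ)*a*s*θ^4*θ⁻¹^2*n 1^2) + ((1/2 : ℝ)*a*s^3*θ^2*θ⁻¹^2) + (a^2*θ^2*n 1^2) + ((2 : ℝ)*a^2*θ^4*θ⁻¹^2) + ((-1 : ℝ)*a^2*θ^4*θ⁻¹^2*n 1^2) + ((-1/2 : ℝ)*a^2*s^2*θ^2*θ⁻¹^2) + ((-1/2 : ℝ)*a^3*s*θ^2*θ⁻¹^2) + ((1/2 : ℝ)*a^4*θ^2*θ⁻¹^2)) * hsv + (((4 : ℝ)*s*θ^2*(min a 0)) + ((-4 : ℝ)*s*θ^2*(min a 0)*n 1^2) + ((4 : ℝ)*s*θ^3*θ⁻¹*(min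 a 0)) + ((-4 : ℝ)*s*θ^3*θ⁻¹*(min a 0)*n 1^2) + ((-1 : ℝ)*s^2*θ^2*n 1^2) + ((-1 : ℝ)*s^2*θ^3*θ⁻¹*n 1^2) + ((-2 : ℝ)*a*s*θ^2) + ((2 : ℝ)*a*s*θ^2*n 1^2) + ((-2 : ℝ)*a*s*θ^3*θ⁻¹) + ((2 : ℝ)*a*s*θ^3*θ⁻¹*n 1^2) + ((1/2 : ℝ)*a*s^3) + ((1/2 : ℝ)*a*s^3*θ*θ⁻¹) + ((2 : ℝ)*a^2*θ^2) + ((-1 : ℝ)*a^2*θ^2*n 1^2) + ((2 : ℝ)*a^2*θ^3*θ⁻¹) + ((-1 : ℝ)*a^2*θ^3*θ⁻¹*n 1^2) + ((-1/2 : ℝ)*a^2*s^2) + ((-1/2 : ℝ)*a^2*s^2*θ*θ⁻¹) + ((-1/2 : ℝ)*a^3*s) + ((-1/2 : ℝ)*a^3*s*θ*θ⁻¹) + ((1/2 : ℝ)*a^4) + ((1/2 : ℝ)*a^4*θ*θ⁻¹)) * htu + (((1/2 : ℝ)*a*s) + ((-1/2 : ℝ)*a^2)) * hs2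
    all_goals try linear_combination (((-2 : ℝ)*s*θ^2*n 1) + ((1/2 : ℝ)*s^3*θ^3*θ⁻¹^3*n 1) + ((2 : ℝ)*a*θ^2*n 1) + ((-1/2 : ℝ)*a*s^2*θ^3*θ⁻¹^3*n 1) + ((-1/2 : ℝ)*a^2*s*θ^3*θ⁻¹^3*n 1) + ((1/2 : ℝ)*a^3*θ^3*θ⁻¹^3*n 1)) * hsv + (((1/2 : ℝ)*s^3*n 1) + ((1/2 : ℝ)*s^3*θ*θ⁻¹*n 1) + ((1/2 : ℝ)*s^3*θ^2*θ⁻¹^2*n 1) + ((-1/2 : ℝ)*a*s^2*n 1) + ((-1/2 : ℝ)*a*s^2*θ*θ⁻¹*n 1) + ((-1/2 : ℝ)*a*s^2*θ^2*θ⁻¹^2*n 1) + ((-1/2 : ℝ)*a^2*s*n 1) + ((-1/2 : ℝ)*a^2*s*θ*θ⁻¹*n 1) + ((-1/2 : ℝ)*a^2*s*θ^2*θ⁻¹^2*n 1) + ((1/2 : ℝ)*a^3*n 1) + ((1/2 : ℝ)*a^3*θ*θ⁻¹*n 1) + ((1/2 : ℝ)*a^3*θ^2*θ⁻¹^2*n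 1)) * htu + (((1/2 : ℝ)*s*n 1) + ((-1/2 : ℝ)*a*n 1)) * hs2
    all_goals linear_combination (((4 : ℝ)*θ^2) + ((4 : ℝ)*s*θ^4*θ⁻¹^4*(min a 0)) + ((-4 : ℝ)*s*θ^4*θ⁻¹^4*(min a 0)*n 1^2) + ((-4 : ℝ)*s*θ^4*θ⁻¹^4*(min a 0)*n 0^2) + ((-1 : ℝ)*s^2*θ^4*θ⁻¹^4*n 1^2) + ((-1 : ℝ)*s^2*θ^4*θ⁻¹^4*n 0^2) + ((-2 : ℝ)*a*s*θ^4*θ⁻¹^4) + ((2 : ℝ)*a*s*θ^4*θ⁻¹^4*n 1^2) + ((2 : ℝ)*a*s*θ^4*θ⁻¹^4*n 0^2) + ((2 : ℝ)*a^2*θ^4*θ⁻¹^4) + ((-1 : ℝ)*a^2*θ^4*θ⁻¹^4*n 1^2) + ((-1 : ℝ)*a^2*θ^4*θ⁻¹^4*n 0^2)) * hsv + (((4 : ℝ)*s*(min a 0)) + ((-4 : ℝ)*s*(min a 0)*n 1^2) + ((-4 : ℝ)*s*(min a 0)*n 0^2) + ((4 : ℝ)*s*θ*θ⁻¹*(min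 a 0)) + ((-4 : ℝ)*s*θ*θ⁻¹*(min a 0)*n 1^2) + ((-4 : ℝ)*s*θ*θ⁻¹*(min a 0)*n 0^2) + ((4 : ℝ)*s*θ^2*θ⁻¹^2*(min a 0)) + ((-4 : ℝ)*s*θ^2*θ⁻¹^2*(min a 0)*n 1^2) + ((-4 : ℝ)*s*θ^2*θ⁻¹^2*(min a 0)*n 0^2) + ((4 : ℝ)*s*θ^3*θ⁻¹^3*(min a 0)) + ((-4 : ℝ)*s*θ^3*θ⁻¹^3*(min a 0)*n 1^2) + ((-4 : ℝ)*s*θ^3*θ⁻¹^3*(min a 0)*n 0^2) + ((-1 : ℝ)*s^2*n 1^2) + ((-1 : ℝ)*s^2*n 0^2) + ((-1 : ℝ)*s^2*θ*θ⁻¹*n 1^2) + ((-1 : ℝ)*s^2*θ*θ⁻¹*n 0^2) + ((-1 : ℝ)*s^2*θ^2*θ⁻¹^2*n 1^2) + ((-1 : ℝ)*s^2*θ^2*θ⁻¹^2*n 0^2) + ((-1 : ℝ)*s^2*θ^3*θ⁻¹^3*n 1^2) + ((-1 : ℝ)*s^2*θ^3*θ⁻¹^3*n 0^2) + ((-2 :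 ℝ)*a*s) + ((2 : ℝ)*a*s*n 1^2) + ((2 : ℝ)*a*s*n 0^2) + ((-2 : ℝ)*a*s*θ*θ⁻¹) + ((2 : ℝ)*a*s*θ*θ⁻¹*n 1^2) + ((2 : ℝ)*a*s*θ*θ⁻¹*n 0^2) + ((-2 : ℝ)*a*s*θ^2*θ⁻¹^2) + ((2 : ℝ)*a*s*θ^2*θ⁻¹^2*n 1^2) + ((2 : ℝ)*a*s*θ^2*θ⁻¹^2*n 0^2) + ((-2 : ℝ)*a*s*θ^3*θ⁻¹^3) + ((2 : ℝ)*a*s*θ^3*θ⁻¹^3*n 1^2) + ((2 : ℝ)*a*s*θ^3*θ⁻¹^3*n 0^2) + ((2 : ℝ)*a^2) + ((-1 : ℝ)*a^2*n 1^2) + ((-1 : ℝ)*a^2*n 0^2) + ((2 : ℝ)*a^2*θ*θ⁻¹) + ((-1 : ℝ)*a^2*θ*θ⁻¹*n 1^2) + ((-1 : ℝ)*a^2*θ*θ⁻¹*n 0^2) + ((2 : ℝ)*a^2*θ^2*θ⁻¹^2) + ((-1 : ℝ)*a^2*θ^2*θ⁻¹^2*n 1^2) + ((-1 : ℝ)*a^2*θ^2*θ⁻¹^2*n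 0^2) + ((2 : ℝ)*a^2*θ^3*θ⁻¹^3) + ((-1 : ℝ)*a^2*θ^3*θ⁻¹^3*n 1^2) + ((-1 : ℝ)*a^2*θ^3*θ⁻¹^3*n 0^2)) * htu + (((-1 : ℝ)*n 1^2) + ((-1 : ℝ)*n 0^2)) * hs2 + (((-4 : ℝ)*θ^2) + ((-4 : ℝ)*s*(min a 0)) + ((2 : ℝ)*a*s) + ((-2 : ℝ)*a^2)) * hn
  rw [hM, hρm]
  simp [Matrix.mulVec, dotProduct, Fin.sum_univ_three]
  refine mul_left_cancel₀ hsne ?_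
  linear_combination (((-1 : ℝ)*s*(min a 0)*n 1^2*φ 1*φ' 1) + ((-1 : ℝ)*s*(min a 0)*n 0*n 1*φ 1*φ' 0) + ((-1 : ℝ)*s*(min a 0)*n 0*n 1*φ 0*φ' 1) + ((-1 : ℝ)*s*(min a 0)*n 0^2*φ 0*φ' 0)) * hn
end

section
/- There exist constants c, C > 0 independent of ρ, θ, v_n such that for all ψ = (φ, χ): c(ρ|v_n|(φ_n^⊥)² + (ρ|v_n| + θ)φ_n² + χ²/(ρ|v_n| + θ)) ≤ |A_n(u)|_Θ ψ·ψ ≤ C(ρ|v_n|(φ_n^⊥)² + (ρ|v_n| + θ)φ_n² + χ²/(ρ|v_n| + θ)). -/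
/-!
With `a = ρ vₙ`, the scaled symbol `S = Θ A Θ` acts as `a` on the tangential line `(n^⊥, 0)` and
as `B = [[a, θ], [θ, 0]]` on `span {(n, 0), e₃}`. The eigenvalues of `B` have opposite signs and
differ by `s = √(a² + 4θ²)`, so `|B| = (B² + θ²) / s`. This gives `|S|` in closed form, and by
uniqueness of positive semidefinite square roots it is the matrix `R |D| Rᵀ` of the statement.
With `p = φₙ` and `q = |φₙ^⊥|` the quadratic form of `Θ⁻¹ |S| Θ⁻¹` is then
`|a| q² + ((a p + χ)² + 2 θ² p² + χ²) / s`, and both `s ≍ |a| + θ` and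
`(a p + χ)² + 2 θ² p² + χ² ≍ (|a| + θ)² p² + χ²` with absolute constants.
-/

open Matrix

namespace Matrix

variable {ι : Type*} [Fintype ι] [DecidableEq ι]

theorem conj_mul_conj_of_mul_transpose_eq_one {R : Matrix ι ι ℝ} (hR : R * Rᵀ = 1)
    (E F : Matrix ι ι ℝ) : (R * E * Rᵀ) * (R * F * Rᵀ) = R * (E * F) * Rᵀ := by
  have hRtR : Rᵀ * R = 1 := mul_eq_one_comm.mp hR
  calc (R * E * Rᵀ) * (R * F * Rᵀ) = R * (E * (Rᵀ * R) * F) * Rᵀ := by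
        simp only [Matrix.mul_assoc]
    _ = R * (E * F) * Rᵀ := by rw [hRtR, Matrix.mul_one]

theorem PosSemidef.eq_conj_diagonal_abs {T S R : Matrix ι ι ℝ} {d : ι → ℝ}
    (hT : T.PosSemidef) (hR : R * Rᵀ = 1) (hS : S = R * diagonal d * Rᵀ)
    (hTS : T * T = S * S) : T = R * diagonal (fun i => |d i|) * Rᵀ := by
  have habs : (R * diagonal (fun i => |d i|) * Rᵀ).PosSemidef := by
    simpa [conjTranspose_eq_transpose_of_trivial] using
      (PosSemidef.diagonal (fun i => abs_nonneg (d i))).mul_mul_conjTranspose_same R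
  open scoped MatrixOrder Matrix.Norms.L2Operator in
  refine (CFC.sq_eq_sq_iff _ _ hT.nonneg habs.nonneg).mp ?_
  rw [sq, sq, hTS, hS, conj_mul_conj_of_mul_transpose_eq_one hR,
    conj_mul_conj_of_mul_transpose_eq_one hR, diagonal_mul_diagonal, diagonal_mul_diagonal]
  simp only [abs_mul_abs_self]

theorem diagonal_mul_mul_diagonal_mulVec_dotProduct (d x : ι → ℝ) (T : Matrix ι ι ℝ) :
    ((diagonal d * T * diagonal d) *ᵥ x) ⬝ᵥ x = (T *ᵥ (d * x)) ⬝ᵥ (d * x) := by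
  have hx : diagonal d *ᵥ x = d * x := funext (mulVec_diagonal d x)
  have hx' : x ᵥ* diagonal d = d * x := funext fun i => by rw [vecMul_diagonal, mul_comm]; rfl
  rw [← mulVec_mulVec, ← mulVec_mulVec, hx, dotProduct_comm, dotProduct_mulVec, hx',
    dotProduct_comm]

end Matrix

section ScaledSymbol

def scaledSymbol (a θ n₀ n₁ : ℝ) : Matrix (Fin 3) (Fin 3) ℝ :=
  !![a, 0, θ * n₀; 0, a, θ * n₁; θ * n₀, θ * n₁, 0]

def tangentialProj (n₀ n₁ : ℝ) : Matrix (Fin 3) (Fin 3) ℝ :=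
  !![n₁ ^ 2, -(n₀ * n₁), 0; -(n₀ * n₁), n₀ ^ 2, 0; 0, 0, 0]

/-- `B² + θ²` on `span {(n, 0), e₃}`, extended by zero. -/
def normalBlock (a θ n₀ n₁ : ℝ) : Matrix (Fin 3) (Fin 3) ℝ :=
  !![(a ^ 2 + 2 * θ ^ 2) * n₀ ^ 2, (a ^ 2 + 2 * θ ^ 2) * (n₀ * n₁), a * θ * n₀;
     (a ^ 2 + 2 * θ ^ 2) * (n₀ * n₁), (a ^ 2 + 2 * θ ^ 2) * n₁ ^ 2, a * θ * n₁;
     a * θ * n₀, a * θ * n₁, 2 * θ ^ 2]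

def normalEnergy (a θ p χ : ℝ) : ℝ :=
  (a * p + χ) ^ 2 + 2 * θ ^ 2 * p ^ 2 + χ ^ 2

noncomputable def scaledSymbolAbs (a θ n₀ n₁ : ℝ) : Matrix (Fin 3) (Fin 3) ℝ :=
  |a| • tangentialProj n₀ n₁ + (√(a ^ 2 + 4 * θ ^ 2))⁻¹ • normalBlock a θ n₀ n₁

theorem diagonal_mul_symbol_mul_diagonal_s7 (a θ n₀ n₁ : ℝ) :
    diagonal ![1, 1, θ] * !![a, 0, n₀; 0, a, n₁; n₀, n₁, 0] * diagonal ![1, 1, θ] =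
      scaledSymbol a θ n₀ n₁ := by
  ext i j
  fin_cases i <;> fin_cases j <;> simp [scaledSymbol, mul_apply, Fin.sum_univ_three] <;> ring

variable (a θ : ℝ) {n₀ n₁ : ℝ}

theorem tangentialProj_mul_self (hn : n₀ ^ 2 + n₁ ^ 2 = 1) :
    tangentialProj n₀ n₁ * tangentialProj n₀ n₁ = tangentialProj n₀ n₁ := by
  ext i j
  fin_cases i <;> fin_cases j <;>
    simp [tangentialProj, mul_apply, Fin.sum_univ_three] <;> grind

theorem tangentialProj_mul_normalBlock :
    tangentialProj n₀ n₁ * normalBlock a θ n₀ n₁ = 0 := by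
  ext i j
  fin_cases i <;> fin_cases j <;>
    simp [tangentialProj, normalBlock, mul_apply, Fin.sum_univ_three] <;> ring

theorem normalBlock_mul_tangentialProj :
    normalBlock a θ n₀ n₁ * tangentialProj n₀ n₁ = 0 := by
  ext i j
  fin_cases i <;> fin_cases j <;>
    simp [tangentialProj, normalBlock, mul_apply, Fin.sum_univ_three] <;> ring

theorem normalBlock_mul_self (hn : n₀ ^ 2 + n₁ ^ 2 = 1) :
    normalBlock a θ n₀ n₁ * normalBlock a θ n₀ n₁ =
      (a ^ 2 + 4 * θ ^ 2) • (scaledSymbol a θ n₀ n₁ * scaledSymbol a θ n₀ n₁)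
        - (a ^ 2 * (a ^ 2 + 4 * θ ^ 2)) • tangentialProj n₀ n₁ := by
  ext i j
  fin_cases i <;> fin_cases j <;>
    simp [tangentialProj, normalBlock, scaledSymbol, mul_apply, Fin.sum_univ_three] <;> grind

theorem scaledSymbolAbs_mul_self (hθ : θ ≠ 0) (hn : n₀ ^ 2 + n₁ ^ 2 = 1) :
    scaledSymbolAbs a θ n₀ n₁ * scaledSymbolAbs a θ n₀ n₁ =
      scaledSymbol a θ n₀ n₁ * scaledSymbol a θ n₀ n₁ := by
  rw [scaledSymbolAbs]
  set s := √(a ^ 2 + 4 * θ ^ 2)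
  have hs : s ^ 2 = a ^ 2 + 4 * θ ^ 2 := Real.sq_sqrt (by positivity)
  have hs0 : s ≠ 0 := Real.sqrt_ne_zero'.mpr (by positivity)
  have hnormal : s⁻¹ * (s⁻¹ * (a ^ 2 + 4 * θ ^ 2)) = 1 := by
    rw [← hs]; field_simp
  have htangential : |a| * |a| = s⁻¹ * (s⁻¹ * (a ^ 2 * (a ^ 2 + 4 * θ ^ 2))) := by
    rw [← hs, abs_mul_abs_self]; field_simp
  simp only [Matrix.add_mul, Matrix.mul_add, Matrix.smul_mul, Matrix.mul_smul,
    tangentialProj_mul_self hn, tangentialProj_mul_normalBlock, normalBlock_mul_tangentialProj,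
    normalBlock_mul_self _ _ hn, smul_zero, add_zero, zero_add, smul_smul, smul_sub, hnormal,
    one_smul, htangential]
  abel

theorem dotProduct_scaledSymbolAbs_mulVec (x : Fin 3 → ℝ) :
    x ⬝ᵥ (scaledSymbolAbs a θ n₀ n₁ *ᵥ x) =
      |a| * (n₁ * x 0 - n₀ * x 1) ^ 2 + (√(a ^ 2 + 4 * θ ^ 2))⁻¹ *
        ((a * (x 0 * n₀ + x 1 * n₁) + θ * x 2) ^ 2 + 2 * θ ^ 2 * (x 0 * n₀ + x 1 * n₁) ^ 2
          + θ ^ 2 * x 2 ^ 2) := by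
  simp [scaledSymbolAbs, tangentialProj, normalBlock, mulVec, dotProduct, Fin.sum_univ_three]
  ring

theorem scaledSymbolAbs_posSemidef : (scaledSymbolAbs a θ n₀ n₁).PosSemidef := by
  rw [posSemidef_iff_dotProduct_mulVec]
  refine ⟨?_, fun x => ?_⟩
  · ext i j
    fin_cases i <;> fin_cases j <;> simp [scaledSymbolAbs, tangentialProj, normalBlock]
  · rw [star_trivial, dotProduct_scaledSymbolAbs_mulVec]
    positivity

theorem scaledSymbolAbs_conj_quadForm (hθ : θ ≠ 0) (φ₀ φ₁ χ : ℝ) :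
    ((diagonal ![1, 1, θ⁻¹] * scaledSymbolAbs a θ n₀ n₁ * diagonal ![1, 1, θ⁻¹]) *ᵥ
        ![φ₀, φ₁, χ]) ⬝ᵥ ![φ₀, φ₁, χ] =
      |a| * (n₁ * φ₀ - n₀ * φ₁) ^ 2 + (√(a ^ 2 + 4 * θ ^ 2))⁻¹ *
        normalEnergy a θ (φ₀ * n₀ + φ₁ * n₁) χ := by
  rw [diagonal_mul_mul_diagonal_mulVec_dotProduct, dotProduct_comm,
    dotProduct_scaledSymbolAbs_mulVec]
  simp [normalEnergy, mul_inv_cancel_left₀ hθ, mul_pow, inv_pow,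
    mul_inv_cancel_left₀ (pow_ne_zero 2 hθ)]

end ScaledSymbol

section Estimates

variable {a θ : ℝ}

theorem abs_add_le_two_mul_sqrt (hθ : 0 ≤ θ) : |a| + θ ≤ 2 * √(a ^ 2 + 4 * θ ^ 2) := by
  rw [← Real.sqrt_sq (by positivity : (0 : ℝ) ≤ |a| + θ), ← Real.sqrt_sq zero_le_two,
    ← Real.sqrt_mul (by positivity)]
  refine Real.sqrt_le_sqrt ?_
  nlinarith [sq_abs a, sq_nonneg (|a| - θ)]

theorem sqrt_le_two_mul_abs_add (hθ : 0 ≤ θ) : √(a ^ 2 + 4 * θ ^ 2) ≤ 2 * (|a| + θ) := by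
  rw [Real.sqrt_le_left (by positivity)]
  nlinarith [sq_abs a, abs_nonneg a]

variable (a θ) (p χ : ℝ)

theorem sq_mul_add_sq_le_normalEnergy :
    (|a| + θ) ^ 2 * p ^ 2 + χ ^ 2 ≤ 8 * normalEnergy a θ p χ := by
  rw [normalEnergy]
  nlinarith [sq_abs a, sq_nonneg (3 * (a * p) + 4 * χ), sq_nonneg ((|a| - θ) * p)]

theorem normalEnergy_le_sq_mul_add_sq (hθ : 0 ≤ θ) :
    normalEnergy a θ p χ ≤ 3 * ((|a| + θ) ^ 2 * p ^ 2 + χ ^ 2) := by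
  rw [normalEnergy]
  nlinarith [sq_abs a, sq_nonneg (a * p - χ),
    mul_nonneg (mul_nonneg (abs_nonneg a) hθ) (sq_nonneg p)]

theorem add_div_eq_sq_mul_add_sq_div (hθ : 0 < θ) :
    (|a| + θ) * p ^ 2 + χ ^ 2 / (|a| + θ) = ((|a| + θ) ^ 2 * p ^ 2 + χ ^ 2) / (|a| + θ) := by
  have hd : 0 < |a| + θ := by positivity
  field_simp

theorem le_normalEnergy_div_sqrt (hθ : 0 < θ) :
    1 / 16 * ((|a| + θ) * p ^ 2 + χ ^ 2 / (|a| + θ)) ≤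
      (√(a ^ 2 + 4 * θ ^ 2))⁻¹ * normalEnergy a θ p χ := by
  have hd : 0 < |a| + θ := by positivity
  have hs : 0 < √(a ^ 2 + 4 * θ ^ 2) := Real.sqrt_pos.mpr (by positivity)
  rw [add_div_eq_sq_mul_add_sq_div a θ p χ hθ, ← div_eq_inv_mul, mul_div_assoc',
    div_le_div_iff₀ hd hs]
  nlinarith [mul_le_mul (sq_mul_add_sq_le_normalEnergy a θ p χ) (sqrt_le_two_mul_abs_add hθ.le)
    hs.le (by unfold normalEnergy; positivity)]

theorem normalEnergy_div_sqrt_le (hθ : 0 < θ) :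
    (√(a ^ 2 + 4 * θ ^ 2))⁻¹ * normalEnergy a θ p χ ≤
      6 * ((|a| + θ) * p ^ 2 + χ ^ 2 / (|a| + θ)) := by
  have hd : 0 < |a| + θ := by positivity
  have hs : 0 < √(a ^ 2 + 4 * θ ^ 2) := Real.sqrt_pos.mpr (by positivity)
  rw [add_div_eq_sq_mul_add_sq_div a θ p χ hθ, ← div_eq_inv_mul, mul_div_assoc',
    div_le_div_iff₀ hs hd]
  nlinarith [mul_le_mul (normalEnergy_le_sq_mul_add_sq a θ p χ hθ.le)
    (abs_add_le_two_mul_sqrt hθ.le) hd.le (by positivity)]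

end Estimates

/-- There exist constants `c, C > 0` independent of `ρ, θ, vₙ` such that for all `ψ = (φ, χ)`:
`c E ≤ |Aₙ(u)|_Θ ψ·ψ ≤ C E` with `E = ρ|vₙ|(φₙ^⊥)² + (ρ|vₙ| + θ)φₙ² + χ²/(ρ|vₙ| + θ)`. -/
theorem stmt_7 :
    ∃ c C : ℝ, 0 < c ∧ 0 < C ∧
      ∀ (ρ θ vn : ℝ) (hρ : 0 < ρ) (hθ : 0 < θ)
    (n : Fin 2 → ℝ) (hn : n 0 ^ 2 + n 1 ^ 2 = 1)
    (Th A : Matrix (Fin 3) (Fin 3) ℝ)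
    (hTh : Th = Matrix.diagonal ![1, 1, θ])
    (hA : A = !![ρ * vn, 0, n 0; 0, ρ * vn, n 1; n 0, n 1, 0])
    (R : Matrix (Fin 3) (Fin 3) ℝ) (dv : Fin 3 → ℝ)
    (hR : R * Rᵀ = 1)
    (hdec : Th * A * Th = R * Matrix.diagonal dv * Rᵀ)
        (Mabs : Matrix (Fin 3) (Fin 3) ℝ)
    (hMabs : Mabs = Th⁻¹ * (R * Matrix.diagonal (fun i => |dv i|) * Rᵀ) * Th⁻¹)
        (φ : Fin 2 → ℝ) (χ : ℝ) (φn : ℝ) (hφn : φn = φ 0 * n 0 + φ 1 * n 1),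
        c * (ρ * |vn| * ((φ 0 - φn * n 0) ^ 2 + (φ 1 - φn * n 1) ^ 2)
              + (ρ * |vn| + θ) * φn ^ 2 + χ ^ 2 / (ρ * |vn| + θ)) ≤
          (Mabs *ᵥ ![φ 0, φ 1, χ]) ⬝ᵥ ![φ 0, φ 1, χ] ∧
        (Mabs *ᵥ ![φ 0, φ 1, χ]) ⬝ᵥ ![φ 0, φ 1, χ] ≤
          C * (ρ * |vn| * ((φ 0 - φn * n 0) ^ 2 + (φ 1 - φn * n 1) ^ 2)
              + (ρ * |vn| + θ) * φn ^ 2 + χ ^ 2 / (ρ * |vn| + θ)) := by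
  refine ⟨1 / 16, 6, by norm_num, by norm_num, ?_⟩
  intro ρ θ vn hρ hθ n hn Th A hTh hA R dv hR hdec Mabs hMabs φ χ φn hφn
  subst hTh hA hMabs hφn
  rw [diagonal_mul_symbol_mul_diagonal_s7] at hdec
  have habs := (scaledSymbolAbs_posSemidef (ρ * vn) θ).eq_conj_diagonal_abs hR hdec
    (scaledSymbolAbs_mul_self _ _ hθ.ne' hn)
  have hinv : (diagonal ![1, 1, θ])⁻¹ = diagonal ![1, 1, θ⁻¹] := by
    refine inv_eq_right_inv ?_
    rw [diagonal_mul_diagonal, ← diagonal_one]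
    congr 1
    ext i
    fin_cases i <;> simp [hθ.ne']
  have htangential : (φ 0 - (φ 0 * n 0 + φ 1 * n 1) * n 0) ^ 2
      + (φ 1 - (φ 0 * n 0 + φ 1 * n 1) * n 1) ^ 2 = (n 1 * φ 0 - n 0 * φ 1) ^ 2 := by
    linear_combination ((φ 0 * n 0 + φ 1 * n 1) ^ 2 - φ 0 ^ 2 - φ 1 ^ 2) * hn
  have hρvn : ρ * |vn| = |ρ * vn| := by rw [abs_mul, abs_of_pos hρ]
  rw [← habs, hinv, scaledSymbolAbs_conj_quadForm _ _ hθ.ne', htangential, hρvn]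
  have hlower := le_normalEnergy_div_sqrt (ρ * vn) θ (φ 0 * n 0 + φ 1 * n 1) χ hθ
  have hupper := normalEnergy_div_sqrt_le (ρ * vn) θ (φ 0 * n 0 + φ 1 * n 1) χ hθ
  have htangential_nonneg : 0 ≤ |ρ * vn| * (n 1 * φ 0 - n 0 * φ 1) ^ 2 := by positivity
  constructor <;> linarith
end

section
/- The quantity α(v) := ρ v_n^- − λ_m³/(θ² + λ_m²), with λ_m = (ρ v_n − √(4θ²+ρ²v_n²))/2, equals (ρ|v_n| − √(4θ² + ρ² v_n²))² / (4√(4θ² + ρ² v_n²)) and is strictly positive. -/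
/-- `α(v) := ρ vₙ⁻ − λm³/(θ² + λm²)` equals
`(ρ|vₙ| − √(4θ² + ρ² vₙ²))² / (4√(4θ² + ρ² vₙ²))` and is strictly positive. -/
theorem stmt_8 (ρ θ vn : ℝ) (hρ : 0 < ρ) (hθ : 0 < θ)
    (lm α : ℝ)
    (hlm : lm = (ρ * vn - Real.sqrt (4 * θ ^ 2 + ρ ^ 2 * vn ^ 2)) / 2)
    (hα : α = ρ * min vn 0 - lm ^ 3 / (θ ^ 2 + lm ^ 2)) :
    α = (ρ * |vn| - Real.sqrt (4 * θ ^ 2 + ρ ^ 2 * vn ^ 2)) ^ 2 /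
      (4 * Real.sqrt (4 * θ ^ 2 + ρ ^ 2 * vn ^ 2)) ∧ 0 < α := by
  set s := Real.sqrt (4 * θ ^ 2 + ρ ^ 2 * vn ^ 2) with hs
  have hpos : (0:ℝ) < 4 * θ ^ 2 + ρ ^ 2 * vn ^ 2 := by positivity
  have hs0 : 0 < s := Real.sqrt_pos.mpr hpos
  have hs2 : s ^ 2 = 4 * θ ^ 2 + ρ ^ 2 * vn ^ 2 := Real.sq_sqrt hpos.le
  have h1 : ρ * vn < s := by nlinarith [sq_nonneg (s - ρ * vn), sq_nonneg (s + ρ * vn)]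
  have h2 : -(ρ * vn) < s := by nlinarith [sq_nonneg (s - ρ * vn), sq_nonneg (s + ρ * vn)]
  have hlm0 : lm < 0 := by rw [hlm]; linarith
  have hden : θ ^ 2 + lm ^ 2 = -s * lm := by
    rw [hlm]; linear_combination (-1/4 : ℝ) * hs2
  have key : lm ^ 3 / (θ ^ 2 + lm ^ 2) = -(lm ^ 2 / s) := by
    rw [hden]; field_simp [hlm0.ne]
  rw [key] at hα
  rcases le_or_gt vn 0 with hv | hv
  · rw [min_eq_left hv] at hα
    rw [abs_of_nonpos hv]
    constructor
    · rw [hα, hlm]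
      have e : ρ * vn - -(((ρ * vn - s) / 2) ^ 2 / s) = (ρ * vn + s) ^ 2 / (4 * s) := by
        field_simp; ring
      rw [e]; ring
    · rw [hα, hlm]
      have e : ρ * vn - -(((ρ * vn - s) / 2) ^ 2 / s) = (ρ * vn + s) ^ 2 / (4 * s) := by
        field_simp; ring
      rw [e]
      exact div_pos (pow_pos (by linarith) 2) (by linarith)
  · rw [min_eq_right hv.le] at hα
    rw [abs_of_pos hv]
    constructor
    · rw [hα, hlm]
      have e2 : ((ρ * vn - s) / 2) ^ 2 / s = (ρ * vn - s) ^ 2 / (4 * s) := by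
        rw [div_pow, div_div]; norm_num
      rw [mul_zero, zero_sub, neg_neg, e2]
    · rw [hα, hlm]
      have h3 : ρ * vn - s < 0 := by linarith
      have e : ρ * 0 - -(((ρ * vn - s) / 2) ^ 2 / s) = ((ρ * vn - s) / 2) ^ 2 / s := by ring
      rw [e]
      have hx : 0 < ((ρ * vn - s) / 2) ^ 2 := by nlinarith
      exact div_pos hx hs0
end

section
/- One has ρ|v_n|/2 + α = (2θ² + ρ² v_n²)/(2√(4θ² + ρ² v_n²)), where α = ρ v_n^- − λ_m³/(θ² + λ_m²) and λ_m = (ρ v_n − √(4θ² + ρ² v_n²))/2. -/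
/-!
`λm` is the negative root of `λ² - ρvₙ λ - θ² = 0`, so `θ² + λm² = -√(4θ² + ρ²vₙ²) λm` and
`λm³/(θ² + λm²) = -λm²/√(4θ² + ρ²vₙ²)`. Since `|vₙ|/2 + vₙ⁻ = vₙ/2`, the left side is
`ρvₙ/2 + λm²/√(4θ² + ρ²vₙ²)`, which simplifies using `√(4θ² + ρ²vₙ²)² = 4θ² + ρ²vₙ²`.
-/

lemma abs_div_two_add_min_zero {K : Type*} [Field K] [LinearOrder K] [IsStrictOrderedRing K]
    (x : K) : |x| / 2 + min x 0 = x / 2 := by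
  rcases le_total x 0 with h | h
  · rw [abs_of_nonpos h, min_eq_left h]; ring
  · rw [abs_of_nonneg h, min_eq_right h]; ring

section NegativeRoot

variable {a θ s : ℝ}

lemma sq_add_sq_eq_neg_mul (hs : s ^ 2 = 4 * θ ^ 2 + a ^ 2) :
    θ ^ 2 + ((a - s) / 2) ^ 2 = -s * ((a - s) / 2) := by
  linear_combination (-1 / 4 : ℝ) * hs

lemma div_two_sub_cube_div_eq (hθ : θ ≠ 0) (hs : s ^ 2 = 4 * θ ^ 2 + a ^ 2) :
    a / 2 - ((a - s) / 2) ^ 3 / (θ ^ 2 + ((a - s) / 2) ^ 2) = (2 * θ ^ 2 + a ^ 2) / (2 * s) := by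
  have hden : θ ^ 2 + ((a - s) / 2) ^ 2 ≠ 0 := by positivity
  rw [sq_add_sq_eq_neg_mul hs] at hden ⊢
  have hs0 : s ≠ 0 := neg_ne_zero.mp (left_ne_zero_of_mul hden)
  field_simp
  linear_combination hs

end NegativeRoot

theorem stmt_10_general (ρ θ vn : ℝ) (hθ : 0 < θ)
    (lm α : ℝ)
    (hlm : lm = (ρ * vn - Real.sqrt (4 * θ ^ 2 + ρ ^ 2 * vn ^ 2)) / 2)
    (hα : α = ρ * min vn 0 - lm ^ 3 / (θ ^ 2 + lm ^ 2)) :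
    ρ * |vn| / 2 + α =
      (2 * θ ^ 2 + ρ ^ 2 * vn ^ 2) / (2 * Real.sqrt (4 * θ ^ 2 + ρ ^ 2 * vn ^ 2)) := by
  have hsq : Real.sqrt (4 * θ ^ 2 + ρ ^ 2 * vn ^ 2) ^ 2 = 4 * θ ^ 2 + (ρ * vn) ^ 2 := by
    rw [Real.sq_sqrt (by positivity), mul_pow]
  have hmain := div_two_sub_cube_div_eq hθ.ne' hsq
  have hsplit := congrArg (ρ * ·) (abs_div_two_add_min_zero vn)
  subst hlm hα
  linear_combination hsplit + hmain

/-- `ρ|vₙ|/2 + α = (2θ² + ρ² vₙ²)/(2√(4θ² + ρ² vₙ²))`, where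
`α = ρ vₙ⁻ − λm³/(θ² + λm²)` and `λm = (ρ vₙ − √(4θ² + ρ² vₙ²))/2`. -/
theorem stmt_10 (ρ θ vn : ℝ) (hρ : 0 < ρ) (hθ : 0 < θ)
    (lm α : ℝ)
    (hlm : lm = (ρ * vn - Real.sqrt (4 * θ ^ 2 + ρ ^ 2 * vn ^ 2)) / 2)
    (hα : α = ρ * min vn 0 - lm ^ 3 / (θ ^ 2 + lm ^ 2)) :
    ρ * |vn| / 2 + α =
      (2 * θ ^ 2 + ρ ^ 2 * vn ^ 2) / (2 * Real.sqrt (4 * θ ^ 2 + ρ ^ 2 * vn ^ 2)) :=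
  stmt_10_general ρ θ vn hθ lm α hlm hα
end

section
/- For d = 2 and φ ∈ ℝ², one has |A_n(u)|_Θ (φ,0)·(φ,0) = ρ|v_n| |φ|² + 2α φ_n², equivalently (1/2)|A_n(u)|_Θ (v,0)·(φ,0) = (ρ/2)|v_n| v·φ + α v_n φ_n for all v, φ ∈ ℝ², where α = (ρ|v_n| − √(4θ²+ρ²v_n²))²/(4√(4θ²+ρ²v_n²)). -/
/-!
`Θ Aₙ Θ` is symmetric, so `R diag |dᵢ| Rᵀ` computed from any orthogonal diagonalisation of it
is the unique positive semidefinite square root of `(Θ Aₙ Θ)²`. It therefore suffices to exhibit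
one explicit positive semidefinite matrix whose square is `(Θ Aₙ Θ)²`, and to read off its
quadratic form on vectors `(v, 0)`, which conjugation by `Θ⁻¹` leaves unchanged.
-/

open Matrix

namespace Matrix

open scoped ComplexOrder

variable {m 𝕜 : Type*} [Fintype m] [DecidableEq m] [RCLike 𝕜]

theorem PosSemidef.eq_of_mul_self_eq {A B : Matrix m m 𝕜} (hA : A.PosSemidef)
    (hB : B.PosSemidef) (h : A * A = B * B) : A = B := by
  open MatrixOrder Matrix.Norms.L2Operator in
  exact (CFC.mul_self_eq_mul_self_iff A B hA.nonneg hB.nonneg).mp h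

theorem orthogonal_conj_diagonal_mul {R : Matrix m m ℝ} (hR : R * Rᵀ = 1) (f g : m → ℝ) :
    (R * diagonal f * Rᵀ) * (R * diagonal g * Rᵀ) = R * diagonal (fun i => f i * g i) * Rᵀ := by
  have hRtR : Rᵀ * R = 1 := mul_eq_one_comm.mp hR
  rw [Matrix.mul_assoc, Matrix.mul_assoc, ← Matrix.mul_assoc Rᵀ, ← Matrix.mul_assoc Rᵀ, hRtR,
    Matrix.one_mul, ← Matrix.mul_assoc (diagonal f), diagonal_mul_diagonal, Matrix.mul_assoc]

theorem posSemidef_conj_diagonal_abs (R : Matrix m m ℝ) (d : m → ℝ) :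
    (R * diagonal (fun i => |d i|) * Rᵀ).PosSemidef := by
  simpa using (posSemidef_diagonal_iff.mpr fun i => abs_nonneg (d i)).mul_mul_conjTranspose_same R

theorem conj_diagonal_abs_eq_of_mul_self_eq {R C : Matrix m m ℝ} {d : m → ℝ} (hR : R * Rᵀ = 1)
    (hC : C.PosSemidef) (hCsq : C * C = (R * diagonal d * Rᵀ) * (R * diagonal d * Rᵀ)) :
    R * diagonal (fun i => |d i|) * Rᵀ = C := by
  refine (posSemidef_conj_diagonal_abs R d).eq_of_mul_self_eq hC ?_
  rw [hCsq, orthogonal_conj_diagonal_mul hR, orthogonal_conj_diagonal_mul hR]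
  simp only [abs_mul_abs_self]

end Matrix

section

variable (a θ : ℝ) (n : Fin 2 → ℝ)

def scaledJacobian : Matrix (Fin 3) (Fin 3) ℝ :=
  !![a, 0, θ * n 0; 0, a, θ * n 1; θ * n 0, θ * n 1, 0]

/- With `s = √(4θ² + a²)`: on `n^⊥ × {0}` the matrix `scaledJacobian a θ n` acts as `a`, and on
`span {(n, 0), (0, 0, 1)}` as `M = [[a, θ], [θ, 0]]`, whose eigenvalues `(a ± s) / 2` have
opposite signs, so `|M| = (M² + θ²) / s`. Assembling `|a|` and `|M|` gives the matrix below. -/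
noncomputable def scaledJacobianAbs : Matrix (Fin 3) (Fin 3) ℝ :=
  let s := √(4 * θ ^ 2 + a ^ 2)
  let κ := a ^ 2 + 2 * θ ^ 2 - |a| * s
  s⁻¹ • !![|a| * s + κ * n 0 ^ 2, κ * n 0 * n 1, a * θ * n 0;
           κ * n 0 * n 1, |a| * s + κ * n 1 ^ 2, a * θ * n 1;
           a * θ * n 0, a * θ * n 1, 2 * θ ^ 2]

variable {a θ n}

theorem scaledJacobianAbs_mul_self (hθ : θ ≠ 0) (hn : n 0 ^ 2 + n 1 ^ 2 = 1) :
    scaledJacobianAbs a θ n * scaledJacobianAbs a θ n =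
      scaledJacobian a θ n * scaledJacobian a θ n := by
  set s := √(4 * θ ^ 2 + a ^ 2) with hs
  have hs2 : s ^ 2 = 4 * θ ^ 2 + a ^ 2 := Real.sq_sqrt (by positivity)
  have hs0 : s ≠ 0 := by positivity
  have ha2 : |a| ^ 2 = a ^ 2 := sq_abs a
  ext i j
  fin_cases i <;> fin_cases j <;>
    simp [scaledJacobianAbs, scaledJacobian, Matrix.mul_apply, Fin.sum_univ_three, ← hs] <;>
    field_simp <;> grind

theorem scaledJacobianAbs_posSemidef (hn : n 0 ^ 2 + n 1 ^ 2 = 1) :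
    (scaledJacobianAbs a θ n).PosSemidef := by
  set s := √(4 * θ ^ 2 + a ^ 2) with hs
  refine .smul ?_ (inv_nonneg.mpr (Real.sqrt_nonneg _))
  refine posSemidef_iff_dotProduct_mulVec.mpr ⟨?_, fun x => ?_⟩
  · ext i j
    fin_cases i <;> fin_cases j <;> simp [mul_comm]
  have hs0 : 0 ≤ |a| * s := by positivity
  refine (show 0 ≤ |a| * s * (n 1 * x 0 - n 0 * x 1) ^ 2
      + (a * (n 0 * x 0 + n 1 * x 1) + θ * x 2) ^ 2
      + 2 * θ ^ 2 * (n 0 * x 0 + n 1 * x 1) ^ 2 + θ ^ 2 * x 2 ^ 2 by positivity).trans_eq ?_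
  simp [Matrix.mulVec, dotProduct, Fin.sum_univ_three, ← hs]
  linear_combination (|a| * s * (x 0 ^ 2 + x 1 ^ 2)) * hn

theorem scaledJacobianAbs_mulVec_dotProduct (hθ : θ ≠ 0) (w φ : Fin 2 → ℝ) :
    (scaledJacobianAbs a θ n *ᵥ ![w 0, w 1, 0]) ⬝ᵥ ![φ 0, φ 1, 0] =
      |a| * (w 0 * φ 0 + w 1 * φ 1) + 2 * ((|a| - √(4 * θ ^ 2 + a ^ 2)) ^ 2 /
        (4 * √(4 * θ ^ 2 + a ^ 2))) * (w 0 * n 0 + w 1 * n 1) * (φ 0 * n 0 + φ 1 * n 1) := by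
  set s := √(4 * θ ^ 2 + a ^ 2) with hs
  have hs2 : s ^ 2 = 4 * θ ^ 2 + a ^ 2 := Real.sq_sqrt (by positivity)
  have hs0 : s ≠ 0 := by positivity
  have two_mul_α : 2 * ((|a| - s) ^ 2 / (4 * s)) = (a ^ 2 + 2 * θ ^ 2 - |a| * s) / s := by
    field_simp
    linear_combination 2 * hs2 + 2 * sq_abs a
  rw [two_mul_α]
  simp [scaledJacobianAbs, Matrix.mulVec, dotProduct, Fin.sum_univ_three, ← hs]
  field_simp
  ring

end

theorem diagonal_inv_conj_mulVec_dotProduct {θ : ℝ} (hθ : θ ≠ 0) (M : Matrix (Fin 3) (Fin 3) ℝ)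
    (w φ : Fin 2 → ℝ) :
    (((diagonal ![1, 1, θ])⁻¹ * M * (diagonal ![1, 1, θ])⁻¹) *ᵥ ![w 0, w 1, 0]) ⬝ᵥ
      ![φ 0, φ 1, 0] = (M *ᵥ ![w 0, w 1, 0]) ⬝ᵥ ![φ 0, φ 1, 0] := by
  have hinv : (diagonal ![1, 1, θ])⁻¹ = diagonal ![1, 1, θ⁻¹] := by
    refine inv_eq_left_inv ?_
    rw [diagonal_mul_diagonal, ← diagonal_one]
    congr 1
    ext i
    fin_cases i <;> simp [hθ]
  have hfix (v : Fin 2 → ℝ) : diagonal ![1, 1, θ⁻¹] *ᵥ ![v 0, v 1, 0] = ![v 0, v 1, 0] := by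
    ext i
    fin_cases i <;> simp [mulVec, dotProduct, Fin.sum_univ_three]
  rw [hinv, ← mulVec_mulVec, ← mulVec_mulVec, hfix, dotProduct_comm, dotProduct_mulVec,
    ← diagonal_transpose, vecMul_transpose, hfix, dotProduct_comm]

/-- For `d = 2` and `φ ∈ ℝ²`: `|Aₙ(u)|_Θ (φ,0)·(φ,0) = ρ|vₙ| |φ|² + 2α φₙ²`, and for all
`w, φ ∈ ℝ²`: `(1/2)|Aₙ(u)|_Θ (w,0)·(φ,0) = (ρ/2)|vₙ| w·φ + α wₙ φₙ`, where
`α = (ρ|vₙ| − √(4θ²+ρ²vₙ²))²/(4√(4θ²+ρ²vₙ²))`. -/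
theorem stmt_11 (ρ θ vn : ℝ) (hρ : 0 < ρ) (hθ : 0 < θ)
    (n : Fin 2 → ℝ) (hn : n 0 ^ 2 + n 1 ^ 2 = 1)
    (Th A : Matrix (Fin 3) (Fin 3) ℝ)
    (hTh : Th = Matrix.diagonal ![1, 1, θ])
    (hA : A = !![ρ * vn, 0, n 0; 0, ρ * vn, n 1; n 0, n 1, 0])
    (R : Matrix (Fin 3) (Fin 3) ℝ) (dv : Fin 3 → ℝ)
    (hR : R * Rᵀ = 1)
    (hdec : Th * A * Th = R * Matrix.diagonal dv * Rᵀ)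
    (Mabs : Matrix (Fin 3) (Fin 3) ℝ)
    (hMabs : Mabs = Th⁻¹ * (R * Matrix.diagonal (fun i => |dv i|) * Rᵀ) * Th⁻¹)
    (α : ℝ)
    (hα : α = (ρ * |vn| - Real.sqrt (4 * θ ^ 2 + ρ ^ 2 * vn ^ 2)) ^ 2 /
      (4 * Real.sqrt (4 * θ ^ 2 + ρ ^ 2 * vn ^ 2))) :
    (∀ φ : Fin 2 → ℝ,
      (Mabs *ᵥ ![φ 0, φ 1, 0]) ⬝ᵥ ![φ 0, φ 1, 0] =
        ρ * |vn| * (φ 0 ^ 2 + φ 1 ^ 2) + 2 * α * (φ 0 * n 0 + φ 1 * n 1) ^ 2) ∧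
    ∀ w φ : Fin 2 → ℝ,
      (1 / 2) * ((Mabs *ᵥ ![w 0, w 1, 0]) ⬝ᵥ ![φ 0, φ 1, 0]) =
        (ρ / 2) * |vn| * (w 0 * φ 0 + w 1 * φ 1)
          + α * (w 0 * n 0 + w 1 * n 1) * (φ 0 * n 0 + φ 1 * n 1) := by
  have hB : Th * A * Th = scaledJacobian (ρ * vn) θ n := by
    rw [hTh, hA]
    ext i j
    fin_cases i <;> fin_cases j <;>
      simp [scaledJacobian, mul_apply, Fin.sum_univ_three, mul_comm]
  have habs : R * diagonal (fun i => |dv i|) * Rᵀ = scaledJacobianAbs (ρ * vn) θ n :=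
    conj_diagonal_abs_eq_of_mul_self_eq hR (scaledJacobianAbs_posSemidef hn)
      (by rw [← hdec, hB, scaledJacobianAbs_mul_self hθ.ne' hn])
  have hbilin (w φ : Fin 2 → ℝ) : (Mabs *ᵥ ![w 0, w 1, 0]) ⬝ᵥ ![φ 0, φ 1, 0] =
      ρ * |vn| * (w 0 * φ 0 + w 1 * φ 1)
        + 2 * α * (w 0 * n 0 + w 1 * n 1) * (φ 0 * n 0 + φ 1 * n 1) := by
    rw [hMabs, hTh, habs, diagonal_inv_conj_mulVec_dotProduct hθ.ne',
      scaledJacobianAbs_mulVec_dotProduct hθ.ne', abs_mul, abs_of_pos hρ, mul_pow, hα]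
  refine ⟨fun φ => ?_, fun w φ => ?_⟩ <;> rw [hbilin] <;> ring
end

section
/- If θ ≥ ρ|v_n|, then with Q(v,p,1) = ρ((1/2)v_n^+ − (1/2)v_n^-) v_n² + (ρ v_n^- v_n + p)p/θ = (2p² + 2pρ v_n^- v_n + θρ|v_n| v_n²)/(2θ), there are absolute constants c, C > 0 with c(p²/θ + ρ|v_n| v_n²) ≤ Q(v,p,1) ≤ C(p²/θ + ρ|v_n| v_n²). -/
/-- If `θ ≥ ρ|vₙ|`, then `Q(v,p,1)` equals `(2p² + 2pρ vₙ⁻ vₙ + θρ|vₙ| vₙ²)/(2θ)`, and there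
are absolute constants `c, C > 0` with `c(p²/θ + ρ|vₙ| vₙ²) ≤ Q(v,p,1) ≤ C(p²/θ + ρ|vₙ| vₙ²)`. -/
theorem stmt_12 :
    ∃ c C : ℝ, 0 < c ∧ 0 < C ∧
      ∀ ρ θ vn p : ℝ, 0 < ρ → 0 < θ → ρ * |vn| ≤ θ →
        (ρ * ((1 / 2) * max vn 0 + (1 / 2 - 1) * min vn 0) * vn ^ 2
            + (1 * ρ * min vn 0 * vn + p) * p / θ
          = (2 * p ^ 2 + 2 * p * ρ * min vn 0 * vn + θ * ρ * |vn| * vn ^ 2) / (2 * θ)) ∧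
        c * (p ^ 2 / θ + ρ * |vn| * vn ^ 2) ≤
          ρ * ((1 / 2) * max vn 0 + (1 / 2 - 1) * min vn 0) * vn ^ 2
            + (1 * ρ * min vn 0 * vn + p) * p / θ ∧
        ρ * ((1 / 2) * max vn 0 + (1 / 2 - 1) * min vn 0) * vn ^ 2
            + (1 * ρ * min vn 0 * vn + p) * p / θ ≤
          C * (p ^ 2 / θ + ρ * |vn| * vn ^ 2) := by
  refine ⟨1/8, 2, by norm_num, by norm_num, fun ρ θ vn p hρ hθ hle => ?_⟩
  have hθ' : θ ≠ 0 := ne_of_gt hθ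
  rcases le_total vn 0 with hv | hv
  · rw [max_eq_right hv, min_eq_left hv, abs_of_nonpos hv] at *
    have ha : 0 ≤ -vn := by linarith
    refine ⟨by field_simp; ring, ?_, ?_⟩
    · rw [← sub_nonneg]
      have heq : ρ * ((1 / 2) * 0 + (1 / 2 - 1) * vn) * vn ^ 2
            + (1 * ρ * vn * vn + p) * p / θ
            - 1/8 * (p ^ 2 / θ + ρ * -vn * vn ^ 2)
          = (7/8 * p ^ 2 + 3/8 * (ρ * -vn) * θ * vn ^ 2 + ρ * vn ^ 2 * p) / θ := by
        field_simp; ring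
      rw [heq]
      apply div_nonneg _ hθ.le
      nlinarith [sq_nonneg (3 * (ρ * vn ^ 2) + 4 * p), sq_nonneg p,
        mul_nonneg (mul_nonneg (mul_nonneg hρ.le ha) (sq_nonneg vn)) (sub_nonneg.2 hle)]
    · rw [← sub_nonneg]
      have heq : 2 * (p ^ 2 / θ + ρ * -vn * vn ^ 2)
            - (ρ * ((1 / 2) * 0 + (1 / 2 - 1) * vn) * vn ^ 2
            + (1 * ρ * vn * vn + p) * p / θ)
          = (p ^ 2 + 3/2 * (ρ * -vn) * θ * vn ^ 2 - ρ * vn ^ 2 * p) / θ := by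
        field_simp; ring
      rw [heq]
      apply div_nonneg _ hθ.le
      nlinarith [sq_nonneg (ρ * vn ^ 2 - p), sq_nonneg p,
        mul_nonneg (mul_nonneg (mul_nonneg hρ.le ha) (sq_nonneg vn)) (sub_nonneg.2 hle)]
  · rw [max_eq_left hv, min_eq_right hv, abs_of_nonneg hv] at *
    have h1 : 0 ≤ ρ * vn * vn ^ 2 := by positivity
    have h2 : 0 ≤ p ^ 2 / θ := by positivity
    have h3 : (1 * ρ * 0 * vn + p) * p / θ = p ^ 2 / θ := by ring
    rw [h3]
    refine ⟨by field_simp; ring, by nlinarith, by nlinarith⟩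
end

section
/- With the reflection ũ = u − (2 v_n n, 0)^T, one has A_n(u)^-_Θ (ũ − u)·ψ = −(2λ_m²/(θ² + λ_m²)) v_n (χ + λ_m φ_n) for all ψ = (φ, χ); in particular A_n(u)^-_Θ (ũ − u) = 0 if and only if v_n = 0. -/
/-!
For the two roots `λₘ < 0 < λₚ` of `λ² = ρ vₙ λ + θ²`, the vectors `e_λ = (λ n, θ)` are
eigenvectors of `ΘAΘ`, and `(n, 0) = (e_λₘ - e_λₚ) / (λₘ - λₚ)`. Applying `f` to the eigenvalues of
any diagonalization `R D Rᵀ` acts on an eigenvector as multiplication by `f` of its eigenvalue, so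
the negative part keeps only `λₘ e_λₘ`. Undoing `Θ` and using `λₘ λₚ = -θ²`, i.e.
`λₘ (λₘ - λₚ) = λₘ² + θ²`, gives `Aₙ(u)⁻_Θ (ũ - u) = -(2λₘ²/(θ² + λₘ²)) vₙ (λₘ n, 1)`.
-/

open Matrix

section Diagonalization

variable {ι K : Type*} [Fintype ι] [DecidableEq ι] [Field K]

theorem conj_diagonal_map_mulVec_of_mulVec_eq_smul {P P' : Matrix ι ι K} (hP : P * P' = 1)
    {d x : ι → K} {μ : K} (hx : (P * diagonal d * P') *ᵥ x = μ • x) (f : K → K) :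
    (P * diagonal (fun i => f (d i)) * P') *ᵥ x = f μ • x := by
  have hP' : P' * P = 1 := mul_eq_one_comm.mp hP
  have hy : ∀ i, (d i - μ) * (P' *ᵥ x) i = 0 := by
    intro i
    have h := congrFun (congrArg (P' *ᵥ ·) hx) i
    simp only [mulVec_mulVec, mulVec_smul, ← Matrix.mul_assoc, hP', Matrix.one_mul] at h
    rw [← mulVec_mulVec, mulVec_diagonal, Pi.smul_apply, smul_eq_mul] at h
    linear_combination h
  have hfy : diagonal (fun i => f (d i)) *ᵥ (P' *ᵥ x) = f μ • (P' *ᵥ x) := by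
    ext i
    rw [mulVec_diagonal, Pi.smul_apply, smul_eq_mul]
    rcases mul_eq_zero.mp (hy i) with h | h
    · rw [sub_eq_zero.mp h]
    · rw [h, mul_zero, mul_zero]
  rw [← mulVec_mulVec, ← mulVec_mulVec, hfy, mulVec_smul, mulVec_mulVec, hP, one_mulVec]

theorem inv_diagonal_of_ne_zero {v : ι → K} (hv : ∀ i, v i ≠ 0) :
    (diagonal v)⁻¹ = diagonal fun i => (v i)⁻¹ := by
  refine inv_eq_left_inv ?_
  rw [diagonal_mul_diagonal, ← diagonal_one]
  congr 1
  ext i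
  exact inv_mul_cancel₀ (hv i)

end Diagonalization

theorem saddle_conj_mulVec_eq_smul_of_sq_eq {K : Type*} [CommRing K] {θ b l : K}
    {n : Fin 2 → K} (hn : n 0 ^ 2 + n 1 ^ 2 = 1) (hl : l ^ 2 = b * l + θ ^ 2) :
    (diagonal ![1, 1, θ] * !![b, 0, n 0; 0, b, n 1; n 0, n 1, 0] * diagonal ![1, 1, θ]) *ᵥ
      ![l * n 0, l * n 1, θ] = l • ![l * n 0, l * n 1, θ] := by
  ext i
  fin_cases i <;> simp [mulVec, dotProduct, Fin.sum_univ_three, diagonal, Matrix.mul_apply]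
  · linear_combination (-n 0) * hl
  · linear_combination (-n 1) * hl
  · linear_combination θ * l * hn

theorem sq_eq_mul_add_of_eq_sub_sqrt {b c l : ℝ} (hc : 0 ≤ c)
    (hl : l = (b - √(4 * c + b ^ 2)) / 2) : l ^ 2 = b * l + c := by
  have hs := Real.sq_sqrt (show 0 ≤ 4 * c + b ^ 2 by positivity)
  rw [hl]
  linear_combination hs / 4

theorem neg_of_eq_sub_sqrt {b c l : ℝ} (hc : 0 < c) (hl : l = (b - √(4 * c + b ^ 2)) / 2) :
    l < 0 := by
  have : b < √(4 * c + b ^ 2) := Real.lt_sqrt_of_sq_lt (by linarith)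
  rw [hl]
  linarith

theorem negPart_saddle_conj_mulVec_normal {ρ θ vn lm : ℝ} (hθ : 0 < θ) {n : Fin 2 → ℝ}
    (hn : n 0 ^ 2 + n 1 ^ 2 = 1) {R : Matrix (Fin 3) (Fin 3) ℝ} {dv : Fin 3 → ℝ}
    (hR : R * Rᵀ = 1)
    (hdec : diagonal ![1, 1, θ] * !![ρ * vn, 0, n 0; 0, ρ * vn, n 1; n 0, n 1, 0] *
      diagonal ![1, 1, θ] = R * diagonal dv * Rᵀ)
    (hlm : lm = (ρ * vn - √(4 * θ ^ 2 + (ρ * vn) ^ 2)) / 2) :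
    (R * diagonal (fun i => min (dv i) 0) * Rᵀ) *ᵥ ![n 0, n 1, 0] =
      (lm ^ 2 / (θ ^ 2 + lm ^ 2)) • ![lm * n 0, lm * n 1, θ] := by
  have hroot := sq_eq_mul_add_of_eq_sub_sqrt (sq_nonneg θ) hlm
  have hlm_neg := neg_of_eq_sub_sqrt (by positivity) hlm
  obtain ⟨lp, hlp⟩ : ∃ lp, lp = ρ * vn - lm := ⟨_, rfl⟩
  have hroot' : lp ^ 2 = ρ * vn * lp + θ ^ 2 := by rw [hlp]; linear_combination hroot
  have hlp_pos : 0 < lp := by nlinarith [hlp]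
  let e : ℝ → Fin 3 → ℝ := fun l => ![l * n 0, l * n 1, θ]
  have heig : ∀ l, l ^ 2 = ρ * vn * l + θ ^ 2 →
      (R * diagonal (fun i => min (dv i) 0) * Rᵀ) *ᵥ e l = min l 0 • e l := fun l hl =>
    conj_diagonal_map_mulVec_of_mulVec_eq_smul hR
      (by rw [← hdec]; exact saddle_conj_mulVec_eq_smul_of_sq_eq hn hl) (fun x => min x 0)
  have hne : lm - lp ≠ 0 := by linarith
  have hnormal : ![n 0, n 1, 0] = (lm - lp)⁻¹ • (e lm - e lp) := by
    ext i
    fin_cases i <;> simp [e] <;> field_simp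
  rw [hnormal, mulVec_smul, mulVec_sub, heig lm hroot, heig lp hroot', min_eq_left hlm_neg.le,
    min_eq_right hlp_pos.le, zero_smul, sub_zero, smul_smul]
  congr 1
  have hpos : θ ^ 2 + lm ^ 2 ≠ 0 := by positivity
  field_simp
  linear_combination -lm * hroot + lm ^ 2 * hlp

theorem stmt_14_general (ρ θ : ℝ) (hθ : 0 < θ)
    (n : Fin 2 → ℝ) (hn : n 0 ^ 2 + n 1 ^ 2 = 1)
    (vn : ℝ)
    (Th A : Matrix (Fin 3) (Fin 3) ℝ)
    (hTh : Th = Matrix.diagonal ![1, 1, θ])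
    (hA : A = !![ρ * vn, 0, n 0; 0, ρ * vn, n 1; n 0, n 1, 0])
    (R : Matrix (Fin 3) (Fin 3) ℝ) (dv : Fin 3 → ℝ)
    (hR : R * Rᵀ = 1)
    (hdec : Th * A * Th = R * Matrix.diagonal dv * Rᵀ)
    (Mneg : Matrix (Fin 3) (Fin 3) ℝ)
    (hMneg : Mneg = Th⁻¹ * (R * Matrix.diagonal (fun i => min (dv i) 0) * Rᵀ) * Th⁻¹)
    (lm : ℝ) (hlm : lm = (ρ * vn - Real.sqrt (4 * θ ^ 2 + ρ ^ 2 * vn ^ 2)) / 2) :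
    (∀ (φ : Fin 2 → ℝ) (χ : ℝ),
      (Mneg *ᵥ ![-(2 * vn * n 0), -(2 * vn * n 1), 0]) ⬝ᵥ ![φ 0, φ 1, χ] =
        -(2 * lm ^ 2 / (θ ^ 2 + lm ^ 2)) * vn * (χ + lm * (φ 0 * n 0 + φ 1 * n 1))) ∧
    (Mneg *ᵥ ![-(2 * vn * n 0), -(2 * vn * n 1), 0] = 0 ↔ vn = 0) := by
  subst hTh hA hMneg
  rw [← mul_pow] at hlm
  have hΘ : ∀ i, ![1, 1, θ] i ≠ 0 := by simp [Fin.forall_fin_succ, hθ.ne']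
  have hjump : diagonal (fun i => (![1, 1, θ] i)⁻¹) *ᵥ ![-(2 * vn * n 0), -(2 * vn * n 1), 0] =
      (-2 * vn) • ![n 0, n 1, 0] := by
    ext i; fin_cases i <;> simp [mulVec_diagonal]
  have hscale : diagonal (fun i => (![1, 1, θ] i)⁻¹) *ᵥ ![lm * n 0, lm * n 1, θ] =
      ![lm * n 0, lm * n 1, 1] := by
    ext i; fin_cases i <;> simp [mulVec_diagonal, hθ.ne']
  have hkey : ((diagonal ![1, 1, θ])⁻¹ * (R * diagonal (fun i => min (dv i) 0) * Rᵀ) *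
      (diagonal ![1, 1, θ])⁻¹) *ᵥ ![-(2 * vn * n 0), -(2 * vn * n 1), 0]
      = (-(2 * lm ^ 2 / (θ ^ 2 + lm ^ 2)) * vn) • ![lm * n 0, lm * n 1, 1] := by
    rw [inv_diagonal_of_ne_zero hΘ, ← mulVec_mulVec, ← mulVec_mulVec, hjump, mulVec_smul,
      negPart_saddle_conj_mulVec_normal hθ hn hR hdec hlm, mulVec_smul, mulVec_smul, hscale,
      smul_smul]
    congr 1
    ring
  refine ⟨fun φ χ => ?_, ?_⟩
  · rw [hkey, smul_dotProduct, vec3_dotProduct, smul_eq_mul]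
    simp only [cons_val_zero, cons_val_one, cons_val_two, head_cons, tail_cons]
    ring
  · have hc : 2 * lm ^ 2 / (θ ^ 2 + lm ^ 2) ≠ 0 := by
      have := (neg_of_eq_sub_sqrt (by positivity) hlm).ne
      positivity
    rw [hkey, smul_eq_zero, or_iff_left fun h => one_ne_zero (congrFun h 2), mul_eq_zero,
      neg_eq_zero, or_iff_right hc]

/-- With the reflection `ũ = u − (2 vₙ n, 0)`:
`Aₙ(u)⁻_Θ (ũ − u)·ψ = −(2λm²/(θ² + λm²)) vₙ (χ + λm φₙ)` for all `ψ = (φ, χ)`;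
in particular `Aₙ(u)⁻_Θ (ũ − u) = 0 ↔ vₙ = 0`. -/
theorem stmt_14 (ρ θ : ℝ) (hρ : 0 < ρ) (hθ : 0 < θ)
    (n : Fin 2 → ℝ) (hn : n 0 ^ 2 + n 1 ^ 2 = 1)
    (v : Fin 2 → ℝ) (p : ℝ) (vn : ℝ) (hvn : vn = v 0 * n 0 + v 1 * n 1)
    (Th A : Matrix (Fin 3) (Fin 3) ℝ)
    (hTh : Th = Matrix.diagonal ![1, 1, θ])
    (hA : A = !![ρ * vn, 0, n 0; 0, ρ * vn, n 1; n 0, n 1, 0])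
    (R : Matrix (Fin 3) (Fin 3) ℝ) (dv : Fin 3 → ℝ)
    (hR : R * Rᵀ = 1)
    (hdec : Th * A * Th = R * Matrix.diagonal dv * Rᵀ)
    (Mneg : Matrix (Fin 3) (Fin 3) ℝ)
    (hMneg : Mneg = Th⁻¹ * (R * Matrix.diagonal (fun i => min (dv i) 0) * Rᵀ) * Th⁻¹)
    (lm : ℝ) (hlm : lm = (ρ * vn - Real.sqrt (4 * θ ^ 2 + ρ ^ 2 * vn ^ 2)) / 2) :
    (∀ (φ : Fin 2 → ℝ) (χ : ℝ),
      (Mneg *ᵥ ![-(2 * vn * n 0), -(2 * vn * n 1), 0]) ⬝ᵥ ![φ 0, φ 1, χ] =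
        -(2 * lm ^ 2 / (θ ^ 2 + lm ^ 2)) * vn * (χ + lm * (φ 0 * n 0 + φ 1 * n 1))) ∧
    (Mneg *ᵥ ![-(2 * vn * n 0), -(2 * vn * n 1), 0] = 0 ↔ vn = 0) :=
  stmt_14_general ρ θ hθ n hn vn Th A hTh hA R dv hR hdec Mneg hMneg lm hlm
end

section
/- With ũ = (v^D, p), i.e. ũ − u = (v^D − v, 0), one has A_n(u)^-_Θ (ũ − u)·ψ = −ρ v_n^- (v − v^D)·φ + α (v − v^D)_n φ_n − β (v − v^D)_n χ for all ψ = (φ, χ), where α = ρ v_n^- − λ_m³/(θ²+λ_m²) and β = λ_m²/(θ²+λ_m²). -/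
open Matrix

set_option maxHeartbeats 4000000

/-- With `ũ = (v^D, p)`, i.e. `ũ − u = (v^D − v, 0)`:
`Aₙ(u)⁻_Θ (ũ − u)·ψ = −ρ vₙ⁻ (v − v^D)·φ + α (v − v^D)ₙ φₙ − β (v − v^D)ₙ χ`,
with `α = ρ vₙ⁻ − λm³/(θ²+λm²)`, `β = λm²/(θ²+λm²)`. -/
theorem stmt_15 (ρ θ : ℝ) (hρ : 0 < ρ) (hθ : 0 < θ)
    (n : Fin 2 → ℝ) (hn : n 0 ^ 2 + n 1 ^ 2 = 1)
    (v : Fin 2 → ℝ) (p : ℝ) (vn : ℝ) (hvn : vn = v 0 * n 0 + v 1 * n 1)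
    (Th A : Matrix (Fin 3) (Fin 3) ℝ)
    (hTh : Th = Matrix.diagonal ![1, 1, θ])
    (hA : A = !![ρ * vn, 0, n 0; 0, ρ * vn, n 1; n 0, n 1, 0])
    (R : Matrix (Fin 3) (Fin 3) ℝ) (dv : Fin 3 → ℝ)
    (hR : R * Rᵀ = 1)
    (hdec : Th * A * Th = R * Matrix.diagonal dv * Rᵀ)
    (Mneg : Matrix (Fin 3) (Fin 3) ℝ)
    (hMneg : Mneg = Th⁻¹ * (R * Matrix.diagonal (fun i => min (dv i) 0) * Rᵀ) * Th⁻¹)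
    (vD : Fin 2 → ℝ)
    (lm α β : ℝ)
    (hlm : lm = (ρ * vn - Real.sqrt (4 * θ ^ 2 + ρ ^ 2 * vn ^ 2)) / 2)
    (hα : α = ρ * min vn 0 - lm ^ 3 / (θ ^ 2 + lm ^ 2))
    (hβ : β = lm ^ 2 / (θ ^ 2 + lm ^ 2)) :
    ∀ (φ : Fin 2 → ℝ) (χ : ℝ),
      (Mneg *ᵥ ![vD 0 - v 0, vD 1 - v 1, 0]) ⬝ᵥ ![φ 0, φ 1, χ] =
        -(ρ * min vn 0) * ((v 0 - vD 0) * φ 0 + (v 1 - vD 1) * φ 1)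
        + α * ((v 0 - vD 0) * n 0 + (v 1 - vD 1) * n 1) * (φ 0 * n 0 + φ 1 * n 1)
        - β * ((v 0 - vD 0) * n 0 + (v 1 - vD 1) * n 1) * χ := by
  intro φ χ
  have hθ0 : θ ≠ 0 := ne_of_gt hθ
  have hs2 : (Real.sqrt (4 * θ ^ 2 + ρ ^ 2 * vn ^ 2)) ^ 2 = 4 * θ ^ 2 + ρ ^ 2 * vn ^ 2 :=
    Real.sq_sqrt (by positivity)
  have hlm_neg : lm < 0 := by
    have h1 : |ρ * vn| < Real.sqrt (4 * θ ^ 2 + ρ ^ 2 * vn ^ 2) := by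
      have h2 : Real.sqrt ((ρ * vn) ^ 2) < Real.sqrt (4 * θ ^ 2 + ρ ^ 2 * vn ^ 2) :=
        Real.sqrt_lt_sqrt (by positivity) (by nlinarith [sq_nonneg (ρ * vn), pow_pos hθ 2])
      rwa [Real.sqrt_sq_eq_abs] at h2
    have h3 := le_abs_self (ρ * vn)
    rw [hlm]; linarith
  have hlm0 : lm ≠ 0 := ne_of_lt hlm_neg
  have hlq : lm ^ 2 = ρ * vn * lm + θ ^ 2 := by
    rw [hlm]; field_simp; linarith [hs2]
  have hL0 : θ ^ 2 + lm ^ 2 ≠ 0 := by positivity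
  have hμ : ρ * vn = (lm ^ 2 - θ ^ 2) / lm := by
    field_simp
    linear_combination -hlq
  set Y := ρ * min vn 0 with hYdef
  set a := -Y / θ ^ 2 + lm ^ 3 / (θ ^ 2 * (θ ^ 2 + lm ^ 2)) with hadef
  set b := Y * ((lm ^ 2 - θ ^ 2) / lm) / θ ^ 2
      - lm ^ 2 * (lm ^ 2 - 2 * θ ^ 2) / (θ ^ 2 * (θ ^ 2 + lm ^ 2)) with hbdef
  set c := Y - lm * (lm ^ 2 - θ ^ 2) / (θ ^ 2 + lm ^ 2) with hcdef
  have h1 : a * (ρ * vn) ^ 2 + b * (ρ * vn) + c = Y := by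
    rw [hμ, hadef, hbdef, hcdef]; field_simp; ring
  have h2 : a * (-θ ^ 2 / lm) ^ 2 + b * (-θ ^ 2 / lm) + c = 0 := by
    rw [hadef, hbdef, hcdef]; field_simp; ring
  have h3 : a * lm ^ 2 + b * lm + c = lm := by
    rw [hadef, hbdef, hcdef]; field_simp; ring
  have hminρ : min (ρ * vn) 0 = Y := by
    rw [hYdef]
    rcases le_total vn 0 with h | h
    · rw [min_eq_left (by nlinarith), min_eq_left h]
    · rw [min_eq_right (by nlinarith), min_eq_right h]; ring
  have hlp_pos : 0 < -θ ^ 2 / lm := by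
    have h4 : θ ^ 2 / lm < 0 := div_neg_of_pos_of_neg (pow_pos hθ 2) hlm_neg
    have h5 : -θ ^ 2 / lm = -(θ ^ 2 / lm) := by ring
    rw [h5]; linarith
  have hq : ∀ x : ℝ, (ρ * vn - x) * (x - -θ ^ 2 / lm) * (x - lm) = 0 →
      min x 0 = a * x ^ 2 + b * x + c := by
    intro x hx
    rcases mul_eq_zero.mp hx with hx | hx
    · rcases mul_eq_zero.mp hx with hx | hx
      · have hxμ : x = ρ * vn := (sub_eq_zero.mp hx).symm
        subst hxμ
        rw [hminρ]; exact h1.symm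
      · have hxp : x = -θ ^ 2 / lm := sub_eq_zero.mp hx
        subst hxp
        rw [min_eq_right hlp_pos.le]; exact h2.symm
    · have hxm : x = lm := sub_eq_zero.mp hx
      subst hxm
      rw [min_eq_left hlm_neg.le]; exact h3.symm
  have hM : Th * A * Th = !![ρ * vn, 0, θ * n 0; 0, ρ * vn, θ * n 1; θ * n 0, θ * n 1, 0] := by
    rw [hTh, hA]
    ext i j
    fin_cases i <;> fin_cases j <;>
      simp [Matrix.mul_apply, Fin.sum_univ_three, Matrix.diagonal] <;> ring
  have hMM : (Th * A * Th) * (Th * A * Th) =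
      !![(ρ * vn) ^ 2 + θ ^ 2 * n 0 ^ 2, θ ^ 2 * (n 0 * n 1), ρ * vn * (θ * n 0);
         θ ^ 2 * (n 0 * n 1), (ρ * vn) ^ 2 + θ ^ 2 * n 1 ^ 2, ρ * vn * (θ * n 1);
         ρ * vn * (θ * n 0), ρ * vn * (θ * n 1), θ ^ 2] := by
    rw [hM]
    ext i j
    fin_cases i <;> fin_cases j <;>
      simp [Matrix.mul_apply, Fin.sum_univ_three]
    all_goals try ring
    all_goals linear_combination θ ^ 2 * hn
  have hdiffD : ∀ i : Fin 3, Matrix.diagonal (fun j => dv j - dv i)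
      = Matrix.diagonal dv - dv i • (1 : Matrix (Fin 3) (Fin 3) ℝ) := by
    intro i
    ext j k
    by_cases h : j = k <;>
      simp [Matrix.diagonal_apply, Matrix.one_apply, h]
  have hdiff : ∀ i : Fin 3, Th * A * Th - dv i • (1 : Matrix (Fin 3) (Fin 3) ℝ)
      = R * Matrix.diagonal (fun j => dv j - dv i) * Rᵀ := by
    intro i
    have h2 : R * (dv i • (1 : Matrix (Fin 3) (Fin 3) ℝ)) * Rᵀ = dv i • 1 := by
      rw [Matrix.mul_smul, Matrix.mul_one, Matrix.smul_mul, hR]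
    rw [hdiffD i, Matrix.mul_sub, Matrix.sub_mul, h2, ← hdec]
  have hdet0 : ∀ i : Fin 3, (Th * A * Th - dv i • (1 : Matrix (Fin 3) (Fin 3) ℝ)).det = 0 := by
    intro i
    rw [hdiff i, Matrix.det_mul, Matrix.det_mul, Matrix.det_diagonal,
      Finset.prod_eq_zero (Finset.mem_univ i) (sub_self (dv i)), mul_zero, zero_mul]
  have hroot : ∀ i : Fin 3,
      (ρ * vn - dv i) * ((dv i) ^ 2 - ρ * vn * (dv i) - θ ^ 2) = 0 := by
    intro i
    have h0 := hdet0 i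
    rw [hM] at h0
    have hE : (!![ρ * vn, 0, θ * n 0; 0, ρ * vn, θ * n 1; θ * n 0, θ * n 1, 0]
        - dv i • (1 : Matrix (Fin 3) (Fin 3) ℝ))
        = !![ρ * vn - dv i, 0, θ * n 0; 0, ρ * vn - dv i, θ * n 1;
             θ * n 0, θ * n 1, -dv i] := by
      ext j k
      fin_cases j <;> fin_cases k <;>
        simp [Matrix.one_apply]
    rw [hE, Matrix.det_fin_three] at h0
    simp only [Matrix.cons_val', Matrix.cons_val_zero, Matrix.cons_val_one,
      Matrix.cons_val_two, Matrix.tail_cons, Matrix.head_cons, Matrix.empty_val',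
      Matrix.cons_val_fin_one, Matrix.head_fin_const, Matrix.of_apply] at h0
    linear_combination h0 + (ρ * vn - dv i) * θ ^ 2 * hn
  have hquad : ∀ x : ℝ, x ^ 2 - ρ * vn * x - θ ^ 2 = (x - -θ ^ 2 / lm) * (x - lm) := by
    intro x
    rw [hμ]
    field_simp
    ring
  have hdmin : ∀ i : Fin 3, min (dv i) 0 = a * (dv i) ^ 2 + b * (dv i) + c := by
    intro i
    refine hq (dv i) ?_
    have h0 := hroot i
    rw [hquad (dv i)] at h0
    linear_combination h0
  have hDiag : Matrix.diagonal (fun i => min (dv i) 0)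
      = a • (Matrix.diagonal dv * Matrix.diagonal dv) + b • Matrix.diagonal dv
        + c • (1 : Matrix (Fin 3) (Fin 3) ℝ) := by
    rw [Matrix.diagonal_mul_diagonal]
    ext i j
    by_cases h : i = j
    · subst h
      simp only [Matrix.diagonal_apply_eq, Matrix.add_apply, Matrix.smul_apply,
        Matrix.one_apply_eq, smul_eq_mul, Pi.mul_apply]
      rw [hdmin i]; ring
    · simp [Matrix.diagonal_apply_ne _ h, Matrix.one_apply_ne h]
  have hRtR : Rᵀ * R = 1 := mul_eq_one_comm.mp hR
  have hMM2 : (Th * A * Th) * (Th * A * Th)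
      = R * (Matrix.diagonal dv * Matrix.diagonal dv) * Rᵀ := by
    rw [hdec]
    simp only [Matrix.mul_assoc]
    rw [← Matrix.mul_assoc Rᵀ R, hRtR, Matrix.one_mul]
  have hKey : R * Matrix.diagonal (fun i => min (dv i) 0) * Rᵀ
      = a • ((Th * A * Th) * (Th * A * Th)) + b • (Th * A * Th)
        + c • (1 : Matrix (Fin 3) (Fin 3) ℝ) := by
    rw [hDiag]
    simp only [Matrix.mul_add, Matrix.add_mul, Matrix.mul_smul, Matrix.smul_mul,
      Matrix.mul_one]
    rw [hR, ← hMM2, ← hdec]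
  have hThi : Th⁻¹ = Matrix.diagonal ![1, 1, θ⁻¹] := by
    apply Matrix.inv_eq_right_inv
    rw [hTh, Matrix.diagonal_mul_diagonal]
    ext i j
    by_cases h : i = j
    · subst h
      fin_cases i <;> simp [mul_inv_cancel₀ hθ0]
    · simp [Matrix.diagonal_apply_ne _ h, Matrix.one_apply_ne h]
  have hone : (1 : Matrix (Fin 3) (Fin 3) ℝ) = !![1,0,0; 0,1,0; 0,0,1] := by
    ext i j; fin_cases i <;> fin_cases j <;> simp [Matrix.one_apply, Matrix.vecHead, Matrix.vecTail]
  have hdiagθ : Matrix.diagonal ![(1:ℝ), 1, θ⁻¹] = !![1,0,0; 0,1,0; 0,0,θ⁻¹] := by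
    ext i j; fin_cases i <;> fin_cases j <;> simp [Matrix.diagonal_apply, Matrix.vecHead, Matrix.vecTail]
  have hP : a • (!![(ρ * vn) ^ 2 + θ ^ 2 * n 0 ^ 2, θ ^ 2 * (n 0 * n 1), ρ * vn * (θ * n 0);
         θ ^ 2 * (n 0 * n 1), (ρ * vn) ^ 2 + θ ^ 2 * n 1 ^ 2, ρ * vn * (θ * n 1);
         ρ * vn * (θ * n 0), ρ * vn * (θ * n 1), θ ^ 2])
      + b • (!![ρ * vn, 0, θ * n 0; 0, ρ * vn, θ * n 1; θ * n 0, θ * n 1, 0])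
      + c • (1 : Matrix (Fin 3) (Fin 3) ℝ) =
      !![a * ((ρ * vn) ^ 2 + θ ^ 2 * n 0 ^ 2) + b * (ρ * vn) + c,
         a * (θ ^ 2 * (n 0 * n 1)),
         a * (ρ * vn * (θ * n 0)) + b * (θ * n 0);
         a * (θ ^ 2 * (n 0 * n 1)),
         a * ((ρ * vn) ^ 2 + θ ^ 2 * n 1 ^ 2) + b * (ρ * vn) + c,
         a * (ρ * vn * (θ * n 1)) + b * (θ * n 1);
         a * (ρ * vn * (θ * n 0)) + b * (θ * n 0),
         a * (ρ * vn * (θ * n 1)) + b * (θ * n 1),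
         a * θ ^ 2 + c] := by
    rw [hone]
    ext i j
    fin_cases i <;> fin_cases j <;>
      simp [Matrix.add_apply, Matrix.smul_apply, smul_eq_mul, Matrix.vecHead, Matrix.vecTail] <;> ring
  rw [hMneg, hKey, hMM, hM, hThi, hdiagθ, hP, Matrix.mul_fin_three, Matrix.mul_fin_three,
    hα, hβ]
  simp only [Matrix.mulVec, dotProduct, Fin.sum_univ_three, Matrix.cons_val',
    Matrix.cons_val_zero, Matrix.cons_val_one, Matrix.cons_val_two, Matrix.tail_cons,
    Matrix.head_cons, Matrix.empty_val', Matrix.cons_val_fin_one, Matrix.head_fin_const,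
    Matrix.of_apply]
  rw [hadef, hbdef, hcdef]
  simp only [hμ]
  field_simp
  ring
end
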